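/- arXiv:1201.6166 — 7 statements merged into one kernel-verified Lean document; each statement's English description precedes it below -/
import Mathlib

section
/- Let M(K(n₁,n₂)) be the middle graph of the complete bipartite graph K(n₁,n₂), where without loss of generality 1 ≤ n₁ ≤ n₂. Then χ_r(M(K(n₁,n₂))) = n₂ + 1 if 0 < r ≤ n₂, and χ_r(M(K(n₁,n₂))) = n₂ + 2 if r = n₂ + 1. -/
open SimpleGraph

noncomputable section

/-- The degree of a vertex, as the natural cardinality of its open neighborhood. -/
def gDeg {V : Type*} (G : SimpleGraph V) (v : V) : ℕ := (G.neighborSet v).ncard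

/-- The maximum degree of a graph. -/
def gMaxDeg {V : Type*} (G : SimpleGraph V) : ℕ := sSup {d : ℕ | ∃ v, gDeg G v = d}

/-- The minimum degree of a graph. -/
def gMinDeg {V : Type*} (G : SimpleGraph V) : ℕ := sInf {d : ℕ | ∃ v, gDeg G v = d}

/-- `c` is a conditional `(k,r)`-coloring of `G`: a surjective map onto the `k` colors that is
proper (C1), and such that every vertex `v` sees at least `min (d v) r` colors on its
neighborhood (C2). -/
def IsCondColoring {V : Type*} (G : SimpleGraph V) (r : ℕ) {k : ℕ} (c : V → Fin k) : Prop :=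
  Function.Surjective c ∧
  (∀ ⦃u v⦄, G.Adj u v → c u ≠ c v) ∧
  ∀ v : V, min (gDeg G v) r ≤ (c '' G.neighborSet v).ncard

/-- The `r`-th order conditional chromatic number of `G`. -/
def condChrom {V : Type*} (G : SimpleGraph V) (r : ℕ) : ℕ :=
  sInf {k : ℕ | ∃ c : V → Fin k, IsCondColoring G r c}

end

/-- The middle graph of `G`: vertices are `V(G) ⊕ E(G)`; two edges are adjacent iff they share
an endpoint, and a vertex is adjacent to an edge iff it is incident with it. -/
def middleG {V : Type*} (G : SimpleGraph V) : SimpleGraph (V ⊕ G.edgeSet) where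
  Adj x y :=
    match x, y with
    | Sum.inl _, Sum.inl _ => False
    | Sum.inl v, Sum.inr e => v ∈ (e : Sym2 V)
    | Sum.inr e, Sum.inl v => v ∈ (e : Sym2 V)
    | Sum.inr e, Sum.inr f => e ≠ f ∧ ∃ v, v ∈ (e : Sym2 V) ∧ v ∈ (f : Sym2 V)
  symm := by
    constructor
    rintro (v | e) (w | f) h
    · exact h.elim
    · exact h
    · exact h
    · exact ⟨h.1.symm, h.2.imp fun v hv => ⟨hv.2, hv.1⟩⟩
  loopless := by
    constructor
    rintro (v | e) h
    · exact h
    · exact h.1 rfl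


section Aux
variable {n₁ n₂ : ℕ}

/-- the edge of the complete bipartite graph joining `i` and `j`. -/
def Ed (i : Fin n₁) (j : Fin n₂) : (completeBipartiteGraph (Fin n₁) (Fin n₂)).edgeSet :=
  ⟨s(Sum.inl i, Sum.inr j), by simp⟩

lemma Ed_inj {i i' : Fin n₁} {j j' : Fin n₂} : Ed i j = Ed i' j' ↔ i = i' ∧ j = j' := by
  simp [Ed, Subtype.ext_iff, Sym2.eq_iff]

lemma edge_cases (e : (completeBipartiteGraph (Fin n₁) (Fin n₂)).edgeSet) :
    ∃ i j, e = Ed i j := by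
  obtain ⟨s, hs⟩ := e
  induction s using Sym2.ind with
  | _ u v =>
    rw [SimpleGraph.mem_edgeSet] at hs
    rcases u with i | j <;> rcases v with i' | j'
    · simp at hs
    · exact ⟨i, j', rfl⟩
    · exact ⟨i', j, Subtype.ext Sym2.eq_swap⟩
    · simp at hs

lemma mem_Ed_inl {i' : Fin n₁} {i : Fin n₁} {j : Fin n₂} :
    (Sum.inl i' : Fin n₁ ⊕ Fin n₂) ∈ ((Ed i j : _) : Sym2 (Fin n₁ ⊕ Fin n₂)) ↔ i' = i := by
  simp [Ed]

lemma mem_Ed_inr {j' : Fin n₂} {i : Fin n₁} {j : Fin n₂} :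
    (Sum.inr j' : Fin n₁ ⊕ Fin n₂) ∈ ((Ed i j : _) : Sym2 (Fin n₁ ⊕ Fin n₂)) ↔ j' = j := by
  simp [Ed]

/-- adjacency unfolding lemmas for the middle graph -/
lemma mAdj_inl_inl {V : Type*} (G : SimpleGraph V) (v w : V) :
    (middleG G).Adj (Sum.inl v) (Sum.inl w) ↔ False := Iff.rfl

lemma mAdj_inl_inr {V : Type*} (G : SimpleGraph V) (v : V) (e : G.edgeSet) :
    (middleG G).Adj (Sum.inl v) (Sum.inr e) ↔ v ∈ (e : Sym2 V) := Iff.rfl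

lemma mAdj_inr_inl {V : Type*} (G : SimpleGraph V) (v : V) (e : G.edgeSet) :
    (middleG G).Adj (Sum.inr e) (Sum.inl v) ↔ v ∈ (e : Sym2 V) := Iff.rfl

lemma mAdj_inr_inr {V : Type*} (G : SimpleGraph V) (e f : G.edgeSet) :
    (middleG G).Adj (Sum.inr e) (Sum.inr f) ↔
      e ≠ f ∧ ∃ v, v ∈ (e : Sym2 V) ∧ v ∈ (f : Sym2 V) := Iff.rfl

/-- the numeric color of an edge : `(i + j) % n₂`. -/
def eNum : Sym2 (Fin n₁ ⊕ Fin n₂) → ℕ :=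
  Sym2.lift ⟨fun u v => (Sum.elim Fin.val Fin.val u + Sum.elim Fin.val Fin.val v) % n₂,
    fun u v => by simp [Nat.add_comm]⟩

lemma eNum_Ed (i : Fin n₁) (j : Fin n₂) :
    eNum ((Ed i j : _) : Sym2 (Fin n₁ ⊕ Fin n₂)) = (i.val + j.val) % n₂ := by
  simp [eNum, Ed]

lemma eNum_lt (hn : 0 < n₂) (e : Sym2 (Fin n₁ ⊕ Fin n₂)) : eNum e < n₂ := by
  induction e using Sym2.ind with
  | _ u v => exact Nat.mod_lt _ hn

lemma mod_inj (i : ℕ) {a b : ℕ} (ha : a < n₂) (hb : b < n₂)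
    (h : (i + a) % n₂ = (i + b) % n₂) : a = b := by
  have : a ≡ b [MOD n₂] := Nat.ModEq.add_left_cancel' i h
  rwa [Nat.ModEq, Nat.mod_eq_of_lt ha, Nat.mod_eq_of_lt hb] at this
end Aux


section Main

variable {n₁ n₂ : ℕ}

local notation "BG" => completeBipartiteGraph (Fin n₁) (Fin n₂)
local notation "MG" => middleG (completeBipartiteGraph (Fin n₁) (Fin n₂))

lemma ncard_ge_of_inj {α : Type*} [Finite α] {m : ℕ} (f : Fin m → α)
    (hf : Function.Injective f) {S : Set α} (h : Set.range f ⊆ S) : m ≤ S.ncard := by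
  have h1 : (Set.range f).ncard = m := by
    rw [← Set.image_univ, Set.ncard_image_of_injective _ hf, Set.ncard_univ,
      Nat.card_eq_fintype_card, Fintype.card_fin]
  rw [← h1]
  exact Set.ncard_le_ncard h (Set.toFinite _)

/-- C2 holds at a vertex where the coloring is injective on the neighborhood. -/
lemma c2_of_injOn {k r : ℕ} (c : (Fin n₁ ⊕ Fin n₂) ⊕ (BG).edgeSet → Fin k)
    (v : (Fin n₁ ⊕ Fin n₂) ⊕ (BG).edgeSet) (h : Set.InjOn c ((MG).neighborSet v)) :
    min (gDeg (MG) v) r ≤ (c '' (MG).neighborSet v).ncard := by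
  calc min (gDeg (MG) v) r ≤ gDeg (MG) v := min_le_left _ _
    _ = ((MG).neighborSet v).ncard := rfl
    _ = (c '' (MG).neighborSet v).ncard := (Set.ncard_image_of_injOn h).symm

/-- edges sharing the left endpoint are adjacent in the middle graph -/
lemma adj_Ed_Ed_left {i : Fin n₁} {j j' : Fin n₂} (h : j ≠ j') :
    (MG).Adj (Sum.inr (Ed i j)) (Sum.inr (Ed i j')) := by
  refine (mAdj_inr_inr _ _ _).mpr ⟨?_, Sum.inl i, mem_Ed_inl.mpr rfl, mem_Ed_inl.mpr rfl⟩
  simp [Ed_inj, h]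

/-- the coloring is injective on the neighborhood of any original vertex,
provided it colors edges by `eNum`. -/
lemma injOn_nbhd_vertex (h₁₂ : n₁ ≤ n₂) {k : ℕ}
    (c : (Fin n₁ ⊕ Fin n₂) ⊕ (BG).edgeSet → Fin k)
    (hc : ∀ e : (BG).edgeSet, (c (Sum.inr e)).val = eNum (e : Sym2 (Fin n₁ ⊕ Fin n₂)))
    (w : Fin n₁ ⊕ Fin n₂) : Set.InjOn c ((MG).neighborSet (Sum.inl w)) := by
  intro x hx y hy hxy
  rw [SimpleGraph.mem_neighborSet] at hx hy
  rcases x with x | e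
  · exact absurd hx (by rw [mAdj_inl_inl]; exact not_false)
  rcases y with y | f
  · exact absurd hy (by rw [mAdj_inl_inl]; exact not_false)
  rw [mAdj_inl_inr] at hx hy
  obtain ⟨ie, je, rfl⟩ := edge_cases e
  obtain ⟨if_, jf, rfl⟩ := edge_cases f
  have hval : eNum ((Ed ie je : _) : Sym2 (Fin n₁ ⊕ Fin n₂)) =
      eNum ((Ed if_ jf : _) : Sym2 (Fin n₁ ⊕ Fin n₂)) := by
    rw [← hc, ← hc, hxy]
  rw [eNum_Ed, eNum_Ed] at hval
  rcases w with i | j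
  · -- left vertex: both edges have left endpoint i
    rw [mem_Ed_inl] at hx hy
    subst hx; subst hy
    have := mod_inj _ je.isLt jf.isLt hval
    rw [Ed_inj.mpr ⟨rfl, Fin.ext this⟩]
  · -- right vertex: both edges have right endpoint j
    rw [mem_Ed_inr] at hx hy
    subst hx; subst hy
    rw [Nat.add_comm ie.val, Nat.add_comm if_.val] at hval
    have := mod_inj _ (lt_of_lt_of_le ie.isLt h₁₂) (lt_of_lt_of_le if_.isLt h₁₂) hval
    rw [Ed_inj.mpr ⟨Fin.ext this, rfl⟩]

lemma eNum_ne_of_adj (h₁₂ : n₁ ≤ n₂) {e f : (BG).edgeSet}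
    (hadj : (MG).Adj (Sum.inr e) (Sum.inr f)) :
    eNum (e : Sym2 (Fin n₁ ⊕ Fin n₂)) ≠ eNum (f : Sym2 (Fin n₁ ⊕ Fin n₂)) := by
  obtain ⟨i, j, rfl⟩ := edge_cases e
  obtain ⟨i', j', rfl⟩ := edge_cases f
  rw [mAdj_inr_inr] at hadj
  obtain ⟨hne, v, hv1, hv2⟩ := hadj
  rw [eNum_Ed, eNum_Ed]
  intro h
  rcases v with a | b
  · rw [mem_Ed_inl] at hv1 hv2
    subst hv1; subst hv2
    have := mod_inj _ j.isLt j'.isLt h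
    exact hne (Ed_inj.mpr ⟨rfl, Fin.ext this⟩)
  · rw [mem_Ed_inr] at hv1 hv2
    subst hv1; subst hv2
    rw [Nat.add_comm i.val, Nat.add_comm i'.val] at h
    have := mod_inj _ (lt_of_lt_of_le i.isLt h₁₂) (lt_of_lt_of_le i'.isLt h₁₂) h
    exact hne (Ed_inj.mpr ⟨Fin.ext this, rfl⟩)

lemma upper1 (h₁ : 1 ≤ n₁) (h₁₂ : n₁ ≤ n₂) (r : ℕ) (hr : r ≤ n₂) :
    ∃ c : (Fin n₁ ⊕ Fin n₂) ⊕ (BG).edgeSet → Fin (n₂ + 1), IsCondColoring (MG) r c := by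
  have hn₂ : 0 < n₂ := h₁.trans h₁₂
  refine ⟨Sum.elim (fun _ => Fin.last n₂)
    (fun e => ⟨eNum (e : Sym2 (Fin n₁ ⊕ Fin n₂)),
      by have := eNum_lt hn₂ (e : Sym2 (Fin n₁ ⊕ Fin n₂)); omega⟩), ?_, ?_, ?_⟩
  · -- surjective
    intro x
    by_cases hx : x.val = n₂
    · exact ⟨Sum.inl (Sum.inl ⟨0, h₁⟩), Fin.ext (by simpa using hx.symm)⟩
    · have hx' : x.val < n₂ := by have := x.isLt; omega
      refine ⟨Sum.inr (Ed ⟨0, h₁⟩ ⟨x.val, hx'⟩), Fin.ext ?_⟩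
      show eNum _ = _
      rw [eNum_Ed]
      simpa using Nat.mod_eq_of_lt hx'
  · -- proper
    rintro (v | e) (w | f) hadj
    · exact absurd hadj (by rw [mAdj_inl_inl]; exact not_false)
    · intro h
      have h' := congrArg Fin.val h
      have := eNum_lt hn₂ (f : Sym2 (Fin n₁ ⊕ Fin n₂))
      simp only [Sum.elim_inl, Sum.elim_inr, Fin.val_last] at h'
      omega
    · intro h
      have h' := congrArg Fin.val h
      have := eNum_lt hn₂ (e : Sym2 (Fin n₁ ⊕ Fin n₂))
      simp only [Sum.elim_inl, Sum.elim_inr, Fin.val_last] at h'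
      omega
    · intro h
      exact eNum_ne_of_adj h₁₂ hadj (congrArg Fin.val h)
  · -- C2
    rintro (w | e)
    · exact c2_of_injOn _ _ (injOn_nbhd_vertex h₁₂ _ (fun e => rfl) w)
    · obtain ⟨i, j, rfl⟩ := edge_cases e
      have hsub : Set.range (fun x : Fin n₂ =>
          if x = j then Fin.last n₂
          else (⟨(i.val + x.val) % n₂,
            lt_of_lt_of_le (Nat.mod_lt _ hn₂) (Nat.le_succ _)⟩ : Fin (n₂ + 1))) ⊆
          (Sum.elim (fun _ => Fin.last n₂)
            (fun e : (BG).edgeSet => ⟨eNum (e : Sym2 (Fin n₁ ⊕ Fin n₂)),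
              by have := eNum_lt hn₂ (e : Sym2 (Fin n₁ ⊕ Fin n₂)); omega⟩)) ''
            (MG).neighborSet (Sum.inr (Ed i j)) := by
        rintro y ⟨x, rfl⟩
        by_cases hx : x = j
        · refine ⟨Sum.inl (Sum.inl i), ?_, ?_⟩
          · exact (SimpleGraph.mem_neighborSet _ _ _).mpr
              ((mAdj_inr_inl _ _ _).mpr (mem_Ed_inl.mpr rfl))
          · simp [hx]
        · refine ⟨Sum.inr (Ed i x), ?_, ?_⟩
          · exact (SimpleGraph.mem_neighborSet _ _ _).mpr
              (adj_Ed_Ed_left (fun h => hx h.symm))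
          · apply Fin.ext
            show eNum _ = _
            rw [eNum_Ed]
            simp [hx]
      have hinj : Function.Injective (fun x : Fin n₂ =>
          if x = j then Fin.last n₂
          else (⟨(i.val + x.val) % n₂,
            lt_of_lt_of_le (Nat.mod_lt _ hn₂) (Nat.le_succ _)⟩ : Fin (n₂ + 1))) := by
        intro a b hab
        dsimp only at hab
        split_ifs at hab with ha hb hb
        · rw [ha, hb]
        · have := congrArg Fin.val hab
          simp only [Fin.val_last] at this
          have h2 : (i.val + b.val) % n₂ < n₂ := Nat.mod_lt _ hn₂
          omega
        · have := congrArg Fin.val hab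
          simp only [Fin.val_last] at this
          have h2 : (i.val + a.val) % n₂ < n₂ := Nat.mod_lt _ hn₂
          omega
        · have := congrArg Fin.val hab
          simp only at this
          exact Fin.ext (mod_inj _ a.isLt b.isLt this)
      calc min (gDeg (MG) (Sum.inr (Ed i j))) r ≤ r := min_le_right _ _
        _ ≤ n₂ := hr
        _ ≤ _ := ncard_ge_of_inj _ hinj hsub

lemma lower1 (h₁ : 1 ≤ n₁) (h₁₂ : n₁ ≤ n₂) (r k : ℕ)
    (c : (Fin n₁ ⊕ Fin n₂) ⊕ (BG).edgeSet → Fin k) (hc : IsCondColoring (MG) r c) :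
    n₂ + 1 ≤ k := by
  obtain ⟨-, hproper, -⟩ := hc
  have hn₂ : 0 < n₂ := h₁.trans h₁₂
  have hginj : Function.Injective (fun x : Fin (n₂ + 1) =>
      if hx : x.val < n₂ then c (Sum.inr (Ed ⟨0, h₁⟩ ⟨x.val, hx⟩))
      else c (Sum.inl (Sum.inl ⟨0, h₁⟩))) := by
    intro a b hab
    dsimp only at hab
    split_ifs at hab with ha hb hb
    · by_contra hne
      have hvne : (⟨a.val, ha⟩ : Fin n₂) ≠ ⟨b.val, hb⟩ := by
        intro h
        have hv : a.val = b.val := by simpa [Fin.ext_iff] using h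
        exact hne (Fin.ext hv)
      exact hproper (adj_Ed_Ed_left hvne) hab
    · exact absurd hab.symm
        (hproper ((mAdj_inl_inr _ _ _).mpr (mem_Ed_inl.mpr rfl)))
    · exact absurd hab
        (hproper ((mAdj_inl_inr _ _ _).mpr (mem_Ed_inl.mpr rfl)))
    · have ha' := a.isLt; have hb' := b.isLt
      exact Fin.ext (by omega)
  have := Fintype.card_le_of_injective _ hginj
  simpa using this

lemma upper2 (h₁ : 1 ≤ n₁) (h₁₂ : n₁ ≤ n₂) :
    ∃ c : (Fin n₁ ⊕ Fin n₂) ⊕ (BG).edgeSet → Fin (n₂ + 2),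
      IsCondColoring (MG) (n₂ + 1) c := by
  have hn₂ : 0 < n₂ := h₁.trans h₁₂
  refine ⟨Sum.elim (Sum.elim (fun _ => ⟨n₂, by omega⟩) (fun _ => ⟨n₂ + 1, by omega⟩))
    (fun e : (BG).edgeSet => ⟨eNum (e : Sym2 (Fin n₁ ⊕ Fin n₂)),
      by have := eNum_lt hn₂ (e : Sym2 (Fin n₁ ⊕ Fin n₂)); omega⟩), ?_, ?_, ?_⟩
  · -- surjective
    intro x
    rcases lt_trichotomy x.val n₂ with hx | hx | hx
    · refine ⟨Sum.inr (Ed ⟨0, h₁⟩ ⟨x.val, hx⟩), Fin.ext ?_⟩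
      show eNum _ = _
      rw [eNum_Ed]
      simpa using Nat.mod_eq_of_lt hx
    · exact ⟨Sum.inl (Sum.inl ⟨0, h₁⟩), Fin.ext (by simpa using hx.symm)⟩
    · have hx' : x.val = n₂ + 1 := by have := x.isLt; omega
      exact ⟨Sum.inl (Sum.inr ⟨0, hn₂⟩), Fin.ext (by simpa using hx'.symm)⟩
  · -- proper
    rintro (v | e) (w | f) hadj
    · exact absurd hadj (by rw [mAdj_inl_inl]; exact not_false)
    · intro h
      have h' := congrArg Fin.val h
      have := eNum_lt hn₂ (f : Sym2 (Fin n₁ ⊕ Fin n₂))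
      rcases v with i | j <;> simp only [Sum.elim_inl, Sum.elim_inr] at h' <;> omega
    · intro h
      have h' := congrArg Fin.val h
      have := eNum_lt hn₂ (e : Sym2 (Fin n₁ ⊕ Fin n₂))
      rcases w with i | j <;> simp only [Sum.elim_inl, Sum.elim_inr] at h' <;> omega
    · intro h
      exact eNum_ne_of_adj h₁₂ hadj (congrArg Fin.val h)
  · -- C2
    rintro (w | e)
    · exact c2_of_injOn _ _ (injOn_nbhd_vertex h₁₂ _ (fun e => rfl) w)
    · obtain ⟨i, j, rfl⟩ := edge_cases e
      have hsub : Set.range (fun x : Fin (n₂ + 1) =>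
          if x.val = n₂ then (⟨n₂ + 1, by omega⟩ : Fin (n₂ + 2))
          else if x.val = j.val then ⟨n₂, by omega⟩
          else ⟨(i.val + x.val) % n₂, by have := Nat.mod_lt (i.val + x.val) hn₂; omega⟩) ⊆
          (Sum.elim (Sum.elim (fun _ => ⟨n₂, by omega⟩) (fun _ => ⟨n₂ + 1, by omega⟩))
            (fun e : (BG).edgeSet => ⟨eNum (e : Sym2 (Fin n₁ ⊕ Fin n₂)),
              by have := eNum_lt hn₂ (e : Sym2 (Fin n₁ ⊕ Fin n₂)); omega⟩)) ''
            (MG).neighborSet (Sum.inr (Ed i j)) := by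
        rintro y ⟨x, rfl⟩
        dsimp only
        by_cases hx1 : x.val = n₂
        · rw [if_pos hx1]
          refine ⟨Sum.inl (Sum.inr j), ?_, rfl⟩
          exact (SimpleGraph.mem_neighborSet _ _ _).mpr
            ((mAdj_inr_inl _ _ _).mpr (mem_Ed_inr.mpr rfl))
        · rw [if_neg hx1]
          by_cases hx2 : x.val = j.val
          · rw [if_pos hx2]
            refine ⟨Sum.inl (Sum.inl i), ?_, rfl⟩
            exact (SimpleGraph.mem_neighborSet _ _ _).mpr
              ((mAdj_inr_inl _ _ _).mpr (mem_Ed_inl.mpr rfl))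
          · rw [if_neg hx2]
            have hxlt : x.val < n₂ := by have := x.isLt; omega
            refine ⟨Sum.inr (Ed i ⟨x.val, hxlt⟩), ?_, ?_⟩
            · refine (SimpleGraph.mem_neighborSet _ _ _).mpr
                (adj_Ed_Ed_left ?_)
              intro h
              exact hx2 (congrArg Fin.val h).symm
            · apply Fin.ext
              show eNum _ = _
              rw [eNum_Ed]
      have hinj : Function.Injective (fun x : Fin (n₂ + 1) =>
          if x.val = n₂ then (⟨n₂ + 1, by omega⟩ : Fin (n₂ + 2))
          else if x.val = j.val then ⟨n₂, by omega⟩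
          else ⟨(i.val + x.val) % n₂, by have := Nat.mod_lt (i.val + x.val) hn₂; omega⟩) := by
        intro a b hab
        dsimp only at hab
        have hma : (i.val + a.val) % n₂ < n₂ := Nat.mod_lt _ hn₂
        have hmb : (i.val + b.val) % n₂ < n₂ := Nat.mod_lt _ hn₂
        have hjlt := j.isLt
        split_ifs at hab with h1 h2 h3 h4 h5 h6 h7 h8
        all_goals
          first
          | exact Fin.ext (by omega)
          | · have hv := congrArg Fin.val hab
              simp only at hv
              first
              | omega
              | exact Fin.ext (mod_inj _ (by have := a.isLt; omega)
                  (by have := b.isLt; omega) hv)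
      calc min (gDeg (MG) (Sum.inr (Ed i j))) (n₂ + 1) ≤ n₂ + 1 := min_le_right _ _
        _ ≤ _ := ncard_ge_of_inj _ hinj hsub

lemma lower2 (h₁ : 1 ≤ n₁) (h₁₂ : n₁ ≤ n₂) (k : ℕ)
    (c : (Fin n₁ ⊕ Fin n₂) ⊕ (BG).edgeSet → Fin k)
    (hc : IsCondColoring (MG) (n₂ + 1) c) : n₂ + 2 ≤ k := by
  obtain ⟨-, hproper, hc2⟩ := hc
  have hn₂ : 0 < n₂ := h₁.trans h₁₂
  set i0 : Fin n₁ := ⟨0, h₁⟩ with hi0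
  set j0 : Fin n₂ := ⟨0, hn₂⟩ with hj0
  have hdeg : n₂ + 1 ≤ gDeg (MG) (Sum.inr (Ed i0 j0)) := by
    refine ncard_ge_of_inj (fun x : Fin (n₂ + 1) =>
      if hx : 0 < x.val ∧ x.val < n₂ then
        (Sum.inr (Ed i0 ⟨x.val, hx.2⟩) : (Fin n₁ ⊕ Fin n₂) ⊕ (BG).edgeSet)
      else if x.val = 0 then Sum.inl (Sum.inl i0) else Sum.inl (Sum.inr j0)) ?_ ?_
    · intro a b hab
      dsimp only at hab
      split_ifs at hab with h1 h2 h3 h4 h5 h6 h7 h8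
      all_goals
        first
        | exact Fin.ext (by omega)
        | · have h' := Sum.inr.inj hab
            have hv : a.val = b.val := by
              have := (Ed_inj.mp h').2
              simpa [Fin.ext_iff] using this
            exact Fin.ext hv
        | simp at hab
    · rintro y ⟨x, rfl⟩
      dsimp only
      rw [SimpleGraph.mem_neighborSet]
      by_cases hx : 0 < x.val ∧ x.val < n₂
      · rw [dif_pos hx]
        refine adj_Ed_Ed_left ?_
        intro h
        have := congrArg Fin.val h
        simp [hj0] at this
        omega
      · rw [dif_neg hx]
        by_cases hx0 : x.val = 0
        · rw [if_pos hx0]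
          exact (mAdj_inr_inl _ _ _).mpr (mem_Ed_inl.mpr rfl)
        · rw [if_neg hx0]
          exact (mAdj_inr_inl _ _ _).mpr (mem_Ed_inr.mpr rfl)
  have h2 := hc2 (Sum.inr (Ed i0 j0))
  rw [min_eq_right hdeg] at h2
  have hnotmem : c (Sum.inr (Ed i0 j0)) ∉
      c '' (MG).neighborSet (Sum.inr (Ed i0 j0)) := by
    rintro ⟨x, hx, hcx⟩
    exact hproper ((SimpleGraph.mem_neighborSet _ _ _).mp hx) hcx.symm
  have hins := Set.ncard_insert_of_notMem hnotmem (Set.toFinite _)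
  have hle : (insert (c (Sum.inr (Ed i0 j0)))
      (c '' (MG).neighborSet (Sum.inr (Ed i0 j0)))).ncard ≤ k := by
    have h3 := Set.ncard_le_ncard (Set.subset_univ (insert (c (Sum.inr (Ed i0 j0)))
      (c '' (MG).neighborSet (Sum.inr (Ed i0 j0))))) (Set.toFinite _)
    rwa [Set.ncard_univ, Nat.card_eq_fintype_card, Fintype.card_fin] at h3
  omega

end Main

/-- For `1 ≤ n₁ ≤ n₂`, the middle graph of the complete bipartite graph
`K(n₁,n₂)` satisfies `χ_r(M(K(n₁,n₂))) = n₂ + 1` if `0 < r ≤ n₂`, and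
`χ_{n₂+1}(M(K(n₁,n₂))) = n₂ + 2`. -/
theorem condChrom_middle_completeBipartite (n₁ n₂ : ℕ) (h₁ : 1 ≤ n₁) (h₁₂ : n₁ ≤ n₂) :
    (∀ r, 0 < r → r ≤ n₂ →
      condChrom (middleG (completeBipartiteGraph (Fin n₁) (Fin n₂))) r = n₂ + 1) ∧
    condChrom (middleG (completeBipartiteGraph (Fin n₁) (Fin n₂))) (n₂ + 1) = n₂ + 2 := by
  constructor
  · intro r _ hrn
    obtain ⟨c, hc⟩ := upper1 h₁ h₁₂ r hrn
    refine le_antisymm (Nat.sInf_le ⟨c, hc⟩) (le_csInf ⟨n₂ + 1, c, hc⟩ ?_)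
    rintro k ⟨c', hc'⟩
    exact lower1 h₁ h₁₂ r k c' hc'
  · obtain ⟨c, hc⟩ := upper2 h₁ h₁₂
    refine le_antisymm (Nat.sInf_le ⟨c, hc⟩) (le_csInf ⟨n₂ + 2, c, hc⟩ ?_)
    rintro k ⟨c', hc'⟩
    exact lower2 h₁ h₁₂ k c' hc'
end

section
/- Let G_n be the n-gear graph for n ≥ 3, with maximum degree Δ = n. Then χ_2(G_n) = 4; χ_3(G_n) = χ_2(C_{2n}) + 1; and for r ≥ 4, χ_r(G_n) = min{r, Δ} + 1. -/
open SimpleGraph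

/-- The `n`-gear graph: `none` is the center vertex; `some i` for `i : Fin (2*n)` are the
cycle vertices in cyclic order (`some i` corresponds to `v_{i+1}`), with the even-indexed ones
(`v₁, v₃, …, v_{2n-1}`) adjacent to the center. -/
def gearGraph (n : ℕ) : SimpleGraph (Option (Fin (2 * n))) where
  Adj x y :=
    match x, y with
    | none, none => False
    | none, some i => i.val % 2 = 0
    | some i, none => i.val % 2 = 0
    | some i, some j => i ≠ j ∧ ((i.val + 1) % (2 * n) = j.val ∨ (j.val + 1) % (2 * n) = i.val)
  symm := by
    constructor
    rintro (_ | i) (_ | j) h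
    · exact h.elim
    · exact h
    · exact h
    · exact ⟨h.1.symm, h.2.symm⟩
  loopless := by
    constructor
    rintro (_ | i) h
    · exact h
    · exact h.1 rfl

namespace GearAux


lemma mod2N {x N : ℕ} (h : x < 2*N) (hN : 0 < N) :
    x % N = if x < N then x else x - N := by
  split_ifs with hx
  · exact Nat.mod_eq_of_lt hx
  · rw [Nat.mod_eq_sub_mod (by omega), Nat.mod_eq_of_lt (by omega)]

/-- successor neighbor on the rim -/
def nbr1 {N : ℕ} (i : Fin N) : Fin N := ⟨(i.val + 1) % N, Nat.mod_lt _ i.pos⟩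

/-- predecessor neighbor on the rim -/
def nbr2 {N : ℕ} (i : Fin N) : Fin N := ⟨(i.val + (N - 1)) % N, Nat.mod_lt _ i.pos⟩

variable {n : ℕ}

lemma adj_some_iff (hn : 3 ≤ n) {i j : Fin (2*n)} :
    (gearGraph n).Adj (some i) (some j) ↔ j = nbr1 i ∨ j = nbr2 i := by
  have hi := i.isLt; have hj := j.isLt
  have h1 := mod2N (x := i.val + 1) (N := 2*n) (by omega) (by omega)
  have h2 := mod2N (x := j.val + 1) (N := 2*n) (by omega) (by omega)
  have h3 := mod2N (x := i.val + (2*n - 1)) (N := 2*n) (by omega) (by omega)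
  show i ≠ j ∧ ((i.val + 1) % (2 * n) = j.val ∨ (j.val + 1) % (2 * n) = i.val) ↔ _
  rw [Ne, Fin.ext_iff, Fin.ext_iff (b := nbr1 i), Fin.ext_iff (b := nbr2 i)]
  show _ ↔ j.val = (i.val + 1) % (2*n) ∨ j.val = (i.val + (2*n-1)) % (2*n)
  rw [h1, h2, h3]
  split_ifs <;> omega

lemma adj_none_some {i : Fin (2*n)} :
    (gearGraph n).Adj none (some i) ↔ i.val % 2 = 0 := Iff.rfl

lemma adj_some_none {i : Fin (2*n)} :
    (gearGraph n).Adj (some i) none ↔ i.val % 2 = 0 := Iff.rfl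

lemma nbr1_ne_nbr2 (hn : 3 ≤ n) (i : Fin (2*n)) : nbr1 i ≠ nbr2 i := by
  have hi := i.isLt
  have h1 := mod2N (x := i.val + 1) (N := 2*n) (by omega) (by omega)
  have h3 := mod2N (x := i.val + (2*n - 1)) (N := 2*n) (by omega) (by omega)
  rw [Ne, Fin.ext_iff]
  show ¬ (i.val + 1) % (2*n) = (i.val + (2*n-1)) % (2*n)
  rw [h1, h3]; split_ifs <;> omega

lemma ns_some_even (hn : 3 ≤ n) {i : Fin (2*n)} (he : i.val % 2 = 0) :
    (gearGraph n).neighborSet (some i) = {none, some (nbr1 i), some (nbr2 i)} := by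
  ext x
  rcases x with _ | j
  · simp [mem_neighborSet, adj_some_none, he]
  · simp only [mem_neighborSet, adj_some_iff hn, Set.mem_insert_iff, Set.mem_singleton_iff,
      Option.some.injEq, reduceCtorEq, false_or]

lemma ns_some_odd (hn : 3 ≤ n) {i : Fin (2*n)} (he : i.val % 2 = 1) :
    (gearGraph n).neighborSet (some i) = {some (nbr1 i), some (nbr2 i)} := by
  ext x
  rcases x with _ | j
  · simp [mem_neighborSet, adj_some_none, he]
  · simp only [mem_neighborSet, adj_some_iff hn, Set.mem_insert_iff, Set.mem_singleton_iff,
      Option.some.injEq]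

lemma ns_none (hn : 3 ≤ n) :
    (gearGraph n).neighborSet none =
      Set.range (fun j : Fin n => (some ⟨2*j.val, by omega⟩ : Option (Fin (2*n)))) := by
  ext x
  rcases x with _ | i
  · simp only [mem_neighborSet, Set.mem_range]
    constructor
    · intro h; exact h.elim
    · rintro ⟨j, h⟩; exact (nomatch h)
  · simp only [mem_neighborSet, adj_none_some, Set.mem_range, Option.some.injEq]
    constructor
    · intro h
      refine ⟨⟨i.val / 2, by omega⟩, ?_⟩
      ext; simp; omega
    · rintro ⟨j, h⟩
      have : 2 * j.val = i.val := by
        have := congrArg Fin.val h; simpa using this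
      omega

lemma gDeg_none (hn : 3 ≤ n) : gDeg (gearGraph n) none = n := by
  rw [gDeg, ns_none hn, ← Nat.card_coe_set_eq,
    Nat.card_range_of_injective, Nat.card_eq_fintype_card, Fintype.card_fin]
  intro a b hab
  have := congrArg Fin.val (Option.some_injective _ hab)
  simp at this
  exact Fin.ext (by omega)

lemma gDeg_even (hn : 3 ≤ n) {i : Fin (2*n)} (he : i.val % 2 = 0) :
    gDeg (gearGraph n) (some i) = 3 := by
  rw [gDeg, ns_some_even hn he]
  rw [Set.ncard_insert_of_notMem (by simp) (Set.toFinite _),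
    Set.ncard_pair (by simp [nbr1_ne_nbr2 hn i])]

lemma gDeg_odd (hn : 3 ≤ n) {i : Fin (2*n)} (he : i.val % 2 = 1) :
    gDeg (gearGraph n) (some i) = 2 := by
  rw [gDeg, ns_some_odd hn he]
  rw [Set.ncard_pair (by simp [nbr1_ne_nbr2 hn i])]

lemma gMaxDeg_gear (hn : 3 ≤ n) : gMaxDeg (gearGraph n) = n := by
  apply le_antisymm
  · refine csSup_le ⟨n, ⟨none, gDeg_none hn⟩⟩ ?_
    rintro d ⟨v, rfl⟩
    rcases v with _ | i
    · exact (gDeg_none hn).le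
    · rcases Nat.mod_two_eq_zero_or_one i.val with he | he
      · rw [gDeg_even hn he]; omega
      · rw [gDeg_odd hn he]; omega
  · apply le_csSup
    · refine ⟨n, ?_⟩
      rintro d ⟨v, rfl⟩
      rcases v with _ | i
      · exact (gDeg_none hn).le
      · rcases Nat.mod_two_eq_zero_or_one i.val with he | he
        · rw [gDeg_even hn he]; omega
        · rw [gDeg_odd hn he]; omega
    · exact ⟨none, gDeg_none hn⟩




section Helpers

variable {β : Type*}

lemma condChrom_eq {V : Type*} (G : SimpleGraph V) (r k : ℕ)
    (hex : ∃ c : V → Fin k, IsCondColoring G r c)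
    (hlb : ∀ k' (c : V → Fin k'), IsCondColoring G r c → k ≤ k') :
    condChrom G r = k := by
  refine le_antisymm (Nat.sInf_le hex) (le_csInf ⟨k, hex⟩ ?_)
  rintro k' ⟨c, hc⟩
  exact hlb k' c hc

lemma pair_ncard_le (a b : β) : ({a, b} : Set β).ncard ≤ 2 :=
  (Set.ncard_insert_le _ _).trans (by simp)

lemma ne_of_pair_ncard {a b : β} (h : 2 ≤ ({a, b} : Set β).ncard) : a ≠ b := by
  rintro rfl
  simp at h

lemma distinct_of_triple_ncard {a b d : β} (h : 3 ≤ ({a, b, d} : Set β).ncard) :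
    a ≠ b ∧ a ≠ d ∧ b ≠ d := by
  refine ⟨?_, ?_, ?_⟩ <;> rintro rfl
  · rw [Set.insert_idem] at h
    have := pair_ncard_le a d; omega
  · have he : ({a, b, a} : Set β) = {a, b} := by ext x; simp; tauto
    rw [he] at h
    have := pair_ncard_le a b; omega
  · have he : ({a, b, b} : Set β) = {a, b} := by ext x; simp
    rw [he] at h
    have := pair_ncard_le a b; omega

lemma three_le_of_distinct {k : ℕ} {a b d : Fin k} (hab : a ≠ b) (had : a ≠ d) (hbd : b ≠ d) :
    3 ≤ k := by
  have h : ({a, b, d} : Finset (Fin k)).card ≤ k := by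
    simpa using Finset.card_le_univ ({a, b, d} : Finset (Fin k))
  rwa [Finset.card_insert_of_notMem (by simp [hab, had]),
    Finset.card_insert_of_notMem (by simp [hbd]), Finset.card_singleton] at h

lemma two_le_ncard_image {V β : Type*} [Finite β] {G : SimpleGraph V} {c : V → β} {v : V}
    {w1 w2 : V} (h1 : G.Adj v w1) (h2 : G.Adj v w2) (hne : c w1 ≠ c w2) :
    2 ≤ (c '' G.neighborSet v).ncard := by
  have : 1 < (c '' G.neighborSet v).ncard := by
    rw [Set.one_lt_ncard (Set.toFinite _)]
    exact ⟨c w1, Set.mem_image_of_mem c h1, c w2, Set.mem_image_of_mem c h2, hne⟩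
  omega

end Helpers

/-! ### The (4,2)-coloring of the gear graph -/

def sCol2 (n j : ℕ) : ℕ := if n % 2 = 1 ∧ j = n - 1 then 2 else j % 2

def oCol2 (n j : ℕ) : ℕ :=
  if n % 2 = 1 ∧ j = n - 1 then 1 else if n % 2 = 1 ∧ j = n - 2 then 0 else 2

lemma sCol2_le (n j : ℕ) : sCol2 n j ≤ 2 := by unfold sCol2; split_ifs <;> omega
lemma oCol2_le (n j : ℕ) : oCol2 n j ≤ 2 := by unfold oCol2; split_ifs <;> omega

def col2 (n : ℕ) : Option (Fin (2*n)) → Fin 4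
  | none => ⟨3, by omega⟩
  | some i =>
      if i.val % 2 = 0 then ⟨sCol2 n (i.val / 2), by have := sCol2_le n (i.val / 2); omega⟩
      else ⟨oCol2 n (i.val / 2), by have := oCol2_le n (i.val / 2); omega⟩

lemma col2_none (n : ℕ) : (col2 n none).val = 3 := rfl

lemma col2_even {n : ℕ} {i : Fin (2*n)} (h : i.val % 2 = 0) :
    (col2 n (some i)).val = sCol2 n (i.val / 2) := by
  simp only [col2, h]; simp

lemma col2_odd {n : ℕ} {i : Fin (2*n)} (h : i.val % 2 = 1) :
    (col2 n (some i)).val = oCol2 n (i.val / 2) := by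
  simp only [col2, h]; simp

variable {n : ℕ}

lemma A1 (hn : 3 ≤ n) {j : ℕ} (hj : j < n) : sCol2 n j ≠ sCol2 n ((j+1) % n) := by
  have hm := mod2N (x := j+1) (N := n) (by omega) (by omega)
  unfold sCol2
  rw [hm]
  split_ifs <;> omega

lemma A2 (hn : 3 ≤ n) {j : ℕ} (hj : j < n) : sCol2 n j ≠ oCol2 n j := by
  unfold sCol2 oCol2
  split_ifs <;> omega

lemma A3 (hn : 3 ≤ n) {j : ℕ} (hj : j < n) : oCol2 n j ≠ sCol2 n ((j+1) % n) := by
  have hm := mod2N (x := j+1) (N := n) (by omega) (by omega)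
  unfold sCol2 oCol2
  rw [hm]
  split_ifs <;> omega

lemma val_nbr1 (hn : 3 ≤ n) (i : Fin (2*n)) :
    (nbr1 i).val = if i.val + 1 < 2*n then i.val + 1 else 0 := by
  show (i.val + 1) % (2*n) = _
  have := mod2N (x := i.val + 1) (N := 2*n) (by have := i.isLt; omega) (by omega)
  rw [this]; have := i.isLt; split_ifs <;> omega

lemma val_nbr2 (hn : 3 ≤ n) (i : Fin (2*n)) :
    (nbr2 i).val = if i.val = 0 then 2*n - 1 else i.val - 1 := by
  show (i.val + (2*n - 1)) % (2*n) = _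
  have := mod2N (x := i.val + (2*n - 1)) (N := 2*n) (by have := i.isLt; omega) (by omega)
  rw [this]; have := i.isLt; split_ifs <;> omega

lemma col2_hub_ne (hn : 3 ≤ n) (j : Fin (2*n)) : col2 n none ≠ col2 n (some j) := by
  rw [Ne, Fin.ext_iff, col2_none]
  rcases Nat.mod_two_eq_zero_or_one j.val with he | he
  · rw [col2_even he]; have := sCol2_le n (j.val/2); omega
  · rw [col2_odd he]; have := oCol2_le n (j.val/2); omega

lemma col2_rim (hn : 3 ≤ n) (i : Fin (2*n)) :
    col2 n (some i) ≠ col2 n (some (nbr1 i)) := by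
  have hi := i.isLt
  have h1 := val_nbr1 hn i
  rw [Ne, Fin.ext_iff]
  rcases Nat.mod_two_eq_zero_or_one i.val with he | he
  · have hodd : (nbr1 i).val % 2 = 1 := by rw [h1]; split_ifs <;> omega
    rw [col2_even he, col2_odd hodd, h1]
    have hlt : i.val + 1 < 2*n := by omega
    rw [if_pos hlt]
    have hq : (i.val + 1) / 2 = i.val / 2 := by omega
    rw [hq]
    exact A2 hn (by omega)
  · have hev : (nbr1 i).val % 2 = 0 := by rw [h1]; split_ifs <;> omega
    rw [col2_odd he, col2_even hev, h1]
    have hm := mod2N (x := i.val/2 + 1) (N := n) (by omega) (by omega)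
    have key : (if i.val + 1 < 2*n then i.val + 1 else 0) / 2 = (i.val / 2 + 1) % n := by
      rw [hm]; split_ifs <;> omega
    rw [key]
    exact A3 hn (by omega)

lemma nbr1_nbr2 (hn : 3 ≤ n) (i : Fin (2*n)) : nbr1 (nbr2 i) = i := by
  have hi := i.isLt
  have h1 := val_nbr1 hn (nbr2 i)
  have h2 := val_nbr2 hn i
  apply Fin.ext
  rw [h1, h2]
  split_ifs <;> omega

lemma col2_spokes_ne (hn : 3 ≤ n) {i : Fin (2*n)} (he : i.val % 2 = 1) :
    col2 n (some (nbr2 i)) ≠ col2 n (some (nbr1 i)) := by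
  have hi := i.isLt
  have h1 := val_nbr1 hn i
  have h2 := val_nbr2 hn i
  have hev2 : (nbr2 i).val % 2 = 0 := by rw [h2]; split_ifs <;> omega
  have hev1 : (nbr1 i).val % 2 = 0 := by rw [h1]; split_ifs <;> omega
  rw [Ne, Fin.ext_iff, col2_even hev2, col2_even hev1, h1, h2]
  have hm := mod2N (x := (i.val - 1)/2 + 1) (N := n) (by omega) (by omega)
  have key : (if i.val + 1 < 2*n then i.val + 1 else 0) / 2 = ((i.val - 1) / 2 + 1) % n := by
    rw [hm]; split_ifs <;> omega
  have h0 : (if i.val = 0 then 2*n-1 else i.val - 1) = i.val - 1 := by split_ifs <;> omega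
  rw [key, h0]
  exact A1 hn (by omega)

lemma col2_proper (hn : 3 ≤ n) : ∀ ⦃u v⦄, (gearGraph n).Adj u v → col2 n u ≠ col2 n v := by
  rintro (_ | i) (_ | j) hadj
  · exact hadj.elim
  · exact col2_hub_ne hn j
  · exact (col2_hub_ne hn i).symm
  · rw [adj_some_iff hn] at hadj
    rcases hadj with rfl | rfl
    · exact col2_rim hn i
    · exact fun h => col2_rim hn (nbr2 i) (by rw [nbr1_nbr2 hn]; exact h.symm)

lemma col2_isCond (hn : 3 ≤ n) : IsCondColoring (gearGraph n) 2 (col2 n) := by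
  have h0 : (col2 n (some ⟨0, by omega⟩)).val = 0 := by
    have hv : (⟨0, by omega⟩ : Fin (2*n)).val / 2 = 0 := by norm_num
    rw [col2_even (by norm_num), hv]
    unfold sCol2; split_ifs <;> omega
  have h1 : (col2 n (some ⟨2, by omega⟩)).val = 1 := by
    have hv : (⟨2, by omega⟩ : Fin (2*n)).val / 2 = 1 := by norm_num
    rw [col2_even (by norm_num), hv]
    unfold sCol2; split_ifs <;> omega
  have h2 : (col2 n (some ⟨1, by omega⟩)).val = 2 := by
    have hv : (⟨1, by omega⟩ : Fin (2*n)).val / 2 = 0 := by norm_num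
    rw [col2_odd (by norm_num), hv]
    unfold oCol2; split_ifs <;> omega
  refine ⟨?_, col2_proper hn, ?_⟩
  · intro x
    have hx := x.isLt
    have : x.val = 0 ∨ x.val = 1 ∨ x.val = 2 ∨ x.val = 3 := by omega
    rcases this with h | h | h | h
    · exact ⟨some ⟨0, by omega⟩, Fin.ext (by rw [h0, h])⟩
    · exact ⟨some ⟨2, by omega⟩, Fin.ext (by rw [h1, h])⟩
    · exact ⟨some ⟨1, by omega⟩, Fin.ext (by rw [h2, h])⟩
    · exact ⟨none, Fin.ext (by rw [col2_none, h])⟩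
  · intro v
    refine le_trans (min_le_right _ _) ?_
    rcases v with _ | i
    · refine two_le_ncard_image (w1 := some ⟨0, by omega⟩) (w2 := some ⟨2, by omega⟩)
        (adj_none_some.mpr (by norm_num)) (adj_none_some.mpr (by norm_num)) ?_
      rw [Ne, Fin.ext_iff, h0, h1]; omega
    · rcases Nat.mod_two_eq_zero_or_one i.val with he | he
      · exact two_le_ncard_image (adj_some_none.mpr he)
          ((adj_some_iff hn).mpr (Or.inl rfl)) (col2_hub_ne hn (nbr1 i))
      · exact two_le_ncard_image ((adj_some_iff hn).mpr (Or.inr rfl))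
          ((adj_some_iff hn).mpr (Or.inl rfl)) (col2_spokes_ne hn he)

lemma gear2_lb (hn : 3 ≤ n) : ∀ (k : ℕ) (c : Option (Fin (2*n)) → Fin k),
    IsCondColoring (gearGraph n) 2 c → 4 ≤ k := by
  rintro k c ⟨hsurj, hprop, hcond⟩
  have hub2 : 2 ≤ ((c '' (gearGraph n).neighborSet none)).ncard := by
    have h := hcond none
    rwa [gDeg_none hn, min_eq_right (by omega)] at h
  obtain ⟨x, hx, y, hy, hxy⟩ := (Set.one_lt_ncard (s := c '' (gearGraph n).neighborSet none) (Set.toFinite _)).mp (by omega)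
  obtain ⟨w1, hw1, rfl⟩ := hx
  obtain ⟨w2, hw2, rfl⟩ := hy
  have h3 : 3 ≤ k :=
    three_le_of_distinct hxy (fun h => hprop hw1 h.symm) (fun h => hprop hw2 h.symm)
  by_contra hk4
  have hk : k = 3 := by omega
  subst hk
  -- every odd rim vertex has the hub's color
  have podd : ∀ i : Fin (2*n), i.val % 2 = 1 → c (some i) = c none := by
    intro i hodd
    have hi := i.isLt
    have hev1 : (nbr1 i).val % 2 = 0 := by rw [val_nbr1 hn]; split_ifs <;> omega
    have hev2 : (nbr2 i).val % 2 = 0 := by rw [val_nbr2 hn]; split_ifs <;> omega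
    have hadj1 : (gearGraph n).Adj (some i) (some (nbr1 i)) := (adj_some_iff hn).mpr (Or.inl rfl)
    have hadj2 : (gearGraph n).Adj (some i) (some (nbr2 i)) := (adj_some_iff hn).mpr (Or.inr rfl)
    have hC := hcond (some i)
    rw [gDeg_odd hn hodd, ns_some_odd hn hodd, Set.image_insert_eq, Set.image_singleton,
      min_self] at hC
    have hb := ne_of_pair_ncard hC
    have n1 : ¬ (c (some i)).val = (c (some (nbr1 i))).val :=
      fun h => hprop hadj1 (Fin.ext h)
    have n2 : ¬ (c (some i)).val = (c (some (nbr2 i))).val :=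
      fun h => hprop hadj2 (Fin.ext h)
    have n3 : ¬ (c none).val = (c (some (nbr1 i))).val :=
      fun h => hprop (adj_none_some.mpr hev1) (Fin.ext h)
    have n4 : ¬ (c none).val = (c (some (nbr2 i))).val :=
      fun h => hprop (adj_none_some.mpr hev2) (Fin.ext h)
    have nb : ¬ (c (some (nbr1 i))).val = (c (some (nbr2 i))).val :=
      fun h => hb (Fin.ext h)
    have b1 := (c (some i)).isLt
    have b2 := (c (some (nbr1 i))).isLt
    have b3 := (c (some (nbr2 i))).isLt
    have b4 := (c none).isLt
    exact Fin.ext (by omega)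
  -- contradiction at the spoke ⟨0⟩
  have hz : (0:ℕ) < 2*n := by omega
  set z0 : Fin (2*n) := ⟨0, hz⟩ with hz0
  have hz0v : z0.val = 0 := rfl
  have h0e : z0.val % 2 = 0 := by rw [hz0v]
  have hC := hcond (some z0)
  rw [gDeg_even hn h0e, ns_some_even hn h0e] at hC
  have hsub : c '' {none, some (nbr1 z0), some (nbr2 z0)} ⊆ {c none} := by
    rintro _ ⟨w, hw, rfl⟩
    simp only [Set.mem_insert_iff, Set.mem_singleton_iff] at hw
    rcases hw with rfl | rfl | rfl
    · rfl
    · exact podd _ (by rw [val_nbr1 hn]; split_ifs <;> omega)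
    · exact podd _ (by rw [val_nbr2 hn]; split_ifs <;> omega)
  have := Set.ncard_le_ncard hsub (Set.toFinite _)
  rw [Set.ncard_singleton] at this
  omega

lemma condChrom_gear2 (hn : 3 ≤ n) : condChrom (gearGraph n) 2 = 4 :=
  condChrom_eq _ _ _ ⟨col2 n, col2_isCond hn⟩ (gear2_lb hn)



/-! ### Cycle graph basics -/

section Cyc

variable {m : ℕ}

lemma fin_add_one_val (v : Fin (m+2)) : (v + 1).val = (v.val + 1) % (m+2) := by
  rw [Fin.add_def, Fin.val_one]

lemma fin_sub_one_val (v : Fin (m+2)) : (v - 1).val = (v.val + (m+1)) % (m+2) := by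
  rw [Fin.sub_def]
  show ((m+2) - ((1 : Fin (m+2)).val) + v.val) % (m+2) = _
  rw [Fin.val_one]
  have h : m + 2 - 1 + v.val = v.val + (m+1) := by omega
  rw [h]

lemma add_one_eq_nbr1 (v : Fin (m+2)) : v + 1 = nbr1 v := Fin.ext (fin_add_one_val v)

lemma sub_one_eq_nbr2 (v : Fin (m+2)) : v - 1 = nbr2 v := by
  apply Fin.ext
  rw [fin_sub_one_val]
  show (v.val + (m+1)) % (m+2) = (v.val + (m + 2 - 1)) % (m+2)
  have h : v.val + (m + 2 - 1) = v.val + (m+1) := by omega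
  rw [h]

lemma cyc_adj_iff {v w : Fin (m+2)} :
    (cycleGraph (m+2)).Adj v w ↔ w = v + 1 ∨ v = w + 1 := by
  rw [cycleGraph_adj]
  rw [sub_eq_iff_eq_add, sub_eq_iff_eq_add]
  rw [add_comm (1 : Fin (m+2)) w, add_comm (1 : Fin (m+2)) v]
  tauto

lemma cyc_adj_succ (v : Fin (m+2)) : (cycleGraph (m+2)).Adj v (v + 1) :=
  cyc_adj_iff.mpr (Or.inl rfl)

lemma cyc_adj_pred (v : Fin (m+2)) : (cycleGraph (m+2)).Adj v (v - 1) :=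
  cyc_adj_iff.mpr (Or.inr (sub_add_cancel v 1).symm)

lemma cyc_nbr_ne (hm : 4 ≤ m) (v : Fin (m+2)) : v - 1 ≠ v + 1 := by
  have hv := v.isLt
  rw [Ne, Fin.ext_iff, fin_sub_one_val, fin_add_one_val]
  have h1 := mod2N (x := v.val + (m+1)) (N := m+2) (by omega) (by omega)
  have h2 := mod2N (x := v.val + 1) (N := m+2) (by omega) (by omega)
  rw [h1, h2]
  split_ifs <;> omega

lemma cyc_gDeg (hm : 4 ≤ m) (v : Fin (m+2)) : gDeg (cycleGraph (m+2)) v = 2 := by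
  rw [gDeg, cycleGraph_neighborSet, Set.ncard_pair (cyc_nbr_ne hm v)]

end Cyc

/-! ### The cyclic patterns used for rim colorings -/

def b8 (j : ℕ) : ℕ :=
  if j = 0 then 0 else if j = 1 then 1 else if j = 2 then 2 else if j = 3 then 3
  else if j = 4 then 0 else if j = 5 then 2 else if j = 6 then 1 else 3

def pat (N i : ℕ) : ℕ :=
  if N % 3 = 0 then i % 3
  else if N % 3 = 1 then (if i < N - 4 then i % 3 else i - (N - 4))
  else (if i < N - 8 then i % 3 else b8 (i - (N - 8)))

def patV (N : ℕ) : ℕ := if N % 3 = 0 then 3 else 4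

lemma patV_pos (N : ℕ) : 0 < patV N := by unfold patV; split_ifs <;> omega

lemma patV_le (N : ℕ) : patV N ≤ 4 := by unfold patV; split_ifs <;> omega

lemma patV_ge (N : ℕ) : 3 ≤ patV N := by unfold patV; split_ifs <;> omega

lemma b8_cases (j : ℕ) : (b8 j = 0 ∧ (j = 0 ∨ j = 4)) ∨ (b8 j = 1 ∧ (j = 1 ∨ j = 6)) ∨
    (b8 j = 2 ∧ (j = 2 ∨ j = 5)) ∨ (b8 j = 3 ∧ (j = 3 ∨ 7 ≤ j)) := by
  unfold b8; split_ifs <;> omega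

lemma pat_lt {N i : ℕ} (hN : 6 ≤ N) (hi : i < N) : pat N i < patV N := by
  have hb := b8_cases (i - (N-8))
  unfold pat patV
  split_ifs <;> rcases hb with ⟨e,h⟩|⟨e,h⟩|⟨e,h⟩|⟨e,h⟩ <;> omega

lemma pat_d1 {N i : ℕ} (hN : 6 ≤ N) (hi : i < N) : pat N i ≠ pat N ((i+1) % N) := by
  have hm := mod2N (x := i+1) (N := N) (by omega) (by omega)
  have hb1 := b8_cases (i - (N-8))
  have hb2 := b8_cases ((i+1) % N - (N-8))
  rw [hm] at hb2
  unfold pat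
  rw [hm]
  split_ifs at hb2 ⊢ <;>
    rcases hb1 with ⟨e1,h1⟩|⟨e1,h1⟩|⟨e1,h1⟩|⟨e1,h1⟩ <;>
    rcases hb2 with ⟨e2,h2⟩|⟨e2,h2⟩|⟨e2,h2⟩|⟨e2,h2⟩ <;> omega

lemma pat_d2 {N i : ℕ} (hN : 6 ≤ N) (hi : i < N) : pat N i ≠ pat N ((i+2) % N) := by
  have hm := mod2N (x := i+2) (N := N) (by omega) (by omega)
  have hb1 := b8_cases (i - (N-8))
  have hb2 := b8_cases ((i+2) % N - (N-8))
  rw [hm] at hb2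
  unfold pat
  rw [hm]
  split_ifs at hb2 ⊢ <;>
    rcases hb1 with ⟨e1,h1⟩|⟨e1,h1⟩|⟨e1,h1⟩|⟨e1,h1⟩ <;>
    rcases hb2 with ⟨e2,h2⟩|⟨e2,h2⟩|⟨e2,h2⟩|⟨e2,h2⟩ <;> omega

lemma pat_0 {N : ℕ} (hN : 6 ≤ N) : pat N 0 = 0 := by
  have hb := b8_cases (0 - (N-8))
  unfold pat; split_ifs <;> rcases hb with ⟨e,h⟩|⟨e,h⟩|⟨e,h⟩|⟨e,h⟩ <;> omega
lemma pat_1 {N : ℕ} (hN : 6 ≤ N) : pat N 1 = 1 := by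
  have hb := b8_cases (1 - (N-8))
  unfold pat; split_ifs <;> rcases hb with ⟨e,h⟩|⟨e,h⟩|⟨e,h⟩|⟨e,h⟩ <;> omega
lemma pat_2 {N : ℕ} (hN : 6 ≤ N) : pat N 2 = 2 := by
  have hb := b8_cases (2 - (N-8))
  unfold pat; split_ifs <;> rcases hb with ⟨e,h⟩|⟨e,h⟩|⟨e,h⟩|⟨e,h⟩ <;> omega
lemma pat_top {N : ℕ} (hN : 6 ≤ N) (h3 : N % 3 ≠ 0) : pat N (N-1) = 3 := by
  have hb := b8_cases (N-1 - (N-8))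
  unfold pat; split_ifs <;> rcases hb with ⟨e,h⟩|⟨e,h⟩|⟨e,h⟩|⟨e,h⟩ <;> omega
lemma pat_46 {N : ℕ} (hN : 6 ≤ N) : pat N 4 = 1 ∨ (pat N 6 = 1 ∧ 7 ≤ N) := by
  have hb4 := b8_cases (4 - (N-8))
  have hb6 := b8_cases (6 - (N-8))
  unfold pat; split_ifs <;>
    rcases hb4 with ⟨e1,h1⟩|⟨e1,h1⟩|⟨e1,h1⟩|⟨e1,h1⟩ <;>
    rcases hb6 with ⟨e2,h2⟩|⟨e2,h2⟩|⟨e2,h2⟩|⟨e2,h2⟩ <;> omega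

/-- the optimal conditional coloring of the rim cycle -/
def cpat (N : ℕ) (i : Fin N) : Fin (patV N) :=
  ⟨pat N i.val % patV N, Nat.mod_lt _ (patV_pos N)⟩

lemma cpat_val {N : ℕ} (hN : 6 ≤ N) (i : Fin N) : (cpat N i).val = pat N i.val :=
  Nat.mod_eq_of_lt (pat_lt hN i.isLt)

lemma cpat_isCond {N : ℕ} (hN : 6 ≤ N) : IsCondColoring (cycleGraph N) 2 (cpat N) := by
  obtain ⟨m, rfl⟩ : ∃ m, N = m + 2 := ⟨N - 2, by omega⟩
  have hm : 4 ≤ m := by omega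
  have key1 : ∀ v : Fin (m+2), cpat (m+2) v ≠ cpat (m+2) (v + 1) := by
    intro v
    rw [Ne, Fin.ext_iff, cpat_val hN, cpat_val hN, fin_add_one_val]
    exact pat_d1 hN v.isLt
  have key2 : ∀ v : Fin (m+2), cpat (m+2) (v - 1) ≠ cpat (m+2) (v + 1) := by
    intro v
    rw [Ne, Fin.ext_iff, cpat_val hN, cpat_val hN, fin_sub_one_val, fin_add_one_val]
    have hv := v.isLt
    have h1 := mod2N (x := v.val + (m+1)) (N := m+2) (by omega) (by omega)
    have heq : ((v.val + (m+1)) % (m+2) + 2) % (m+2) = (v.val + 1) % (m+2) := by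
      have h2 := mod2N (x := (v.val + (m+1)) % (m+2) + 2) (N := m+2)
        (by rw [h1]; split_ifs <;> omega) (by omega)
      have h3 := mod2N (x := v.val + 1) (N := m+2) (by omega) (by omega)
      rw [h2, h3, h1]
      split_ifs <;> omega
    rw [← heq]
    exact pat_d2 hN (Nat.mod_lt _ (by omega))
  refine ⟨?_, ?_, ?_⟩
  · -- surjective
    intro x
    have hx := x.isLt
    have hV := patV_le (m+2)
    have h0 : (cpat (m+2) ⟨0, by omega⟩).val = pat (m+2) 0 := cpat_val hN _
    have h1 : (cpat (m+2) ⟨1, by omega⟩).val = pat (m+2) 1 := cpat_val hN _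
    have h2 : (cpat (m+2) ⟨2, by omega⟩).val = pat (m+2) 2 := cpat_val hN _
    have : x.val = 0 ∨ x.val = 1 ∨ x.val = 2 ∨ x.val = 3 := by omega
    rcases this with h | h | h | h
    · exact ⟨⟨0, by omega⟩, Fin.ext (by rw [h0, pat_0 hN, h])⟩
    · exact ⟨⟨1, by omega⟩, Fin.ext (by rw [h1, pat_1 hN, h])⟩
    · exact ⟨⟨2, by omega⟩, Fin.ext (by rw [h2, pat_2 hN, h])⟩
    · -- color 3 exists only when patV = 4
      have h3 : (m+2) % 3 ≠ 0 := by
        intro hc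
        have : patV (m+2) = 3 := by unfold patV; simp [hc]
        omega
      have hlt : m+1 < m+2 := by omega
      have hv : (cpat (m+2) ⟨m+1, hlt⟩).val = pat (m+2) (m+1) := cpat_val hN _
      exact ⟨⟨m+1, hlt⟩, Fin.ext (by
        rw [hv, h]
        have he : (m + 2) - 1 = m + 1 := by omega
        rw [← he, pat_top hN h3])⟩
  · -- proper
    intro u v hadj
    rcases cyc_adj_iff.mp hadj with rfl | rfl
    · exact key1 u
    · exact fun h => key1 v h.symm
  · -- C2
    intro v
    refine le_trans (min_le_right _ _) ?_
    rw [cycleGraph_neighborSet, Set.image_insert_eq, Set.image_singleton]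
    rw [Set.ncard_pair (key2 v)]

/-! ### Lower bounds for conditional colorings of cycles -/

lemma cyc_pair_distinct {m k : ℕ} (hm : 4 ≤ m) {c : Fin (m+2) → Fin k}
    (hcond : ∀ v, min (gDeg (cycleGraph (m+2)) v) 2 ≤
      (c '' (cycleGraph (m+2)).neighborSet v).ncard)
    (v : Fin (m+2)) : c (v - 1) ≠ c (v + 1) := by
  have h := hcond v
  rw [cyc_gDeg hm, cycleGraph_neighborSet, Set.image_insert_eq, Set.image_singleton,
    min_self] at h
  exact ne_of_pair_ncard h

lemma cyc_lb3 {N : ℕ} (hN : 6 ≤ N) :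
    ∀ (k : ℕ) (c : Fin N → Fin k), IsCondColoring (cycleGraph N) 2 c → 3 ≤ k := by
  obtain ⟨m, rfl⟩ : ∃ m, N = m + 2 := ⟨N - 2, by omega⟩
  rintro k c ⟨hsurj, hprop, hcond⟩
  have hm : 4 ≤ m := by omega
  have hd := cyc_pair_distinct hm hcond 0
  exact three_le_of_distinct hd (fun h => hprop (cyc_adj_pred 0) h.symm)
    (fun h => hprop (cyc_adj_succ 0) h.symm)

open Fin.CommRing in
lemma cyc_lb4 {N : ℕ} (hN : 6 ≤ N) (h3 : N % 3 ≠ 0) :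
    ∀ (k : ℕ) (c : Fin N → Fin k), IsCondColoring (cycleGraph N) 2 c → 4 ≤ k := by
  obtain ⟨m, rfl⟩ : ∃ m, N = m + 2 := ⟨N - 2, by omega⟩
  intro k c hc
  by_contra hk4
  have h3k := cyc_lb3 hN k c hc
  obtain ⟨hsurj, hprop, hcond⟩ := hc
  have hk : k = 3 := by omega
  subst hk
  have hm : 4 ≤ m := by omega
  have D1 : ∀ v : Fin (m+2), c v ≠ c (v + 1) := fun v => hprop (cyc_adj_succ v)
  have D2 : ∀ v : Fin (m+2), c v ≠ c (v + 1 + 1) := by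
    intro v
    have h := cyc_pair_distinct hm hcond (v + 1)
    rwa [add_sub_cancel_right] at h
  have step : ∀ v : Fin (m+2), c (v + 1 + 1 + 1) = c v := by
    intro v
    have n1 : ¬ (c v).val = (c (v+1)).val := fun h => D1 v (Fin.ext h)
    have n2 : ¬ (c (v+1)).val = (c (v+1+1)).val := fun h => D1 (v+1) (Fin.ext h)
    have n3 : ¬ (c v).val = (c (v+1+1)).val := fun h => D2 v (Fin.ext h)
    have n4 : ¬ (c (v+1+1)).val = (c (v+1+1+1)).val := fun h => D1 (v+1+1) (Fin.ext h)
    have n5 : ¬ (c (v+1)).val = (c (v+1+1+1)).val := fun h => D2 (v+1) (Fin.ext h)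
    have b1 := (c v).isLt; have b2 := (c (v+1)).isLt; have b3 := (c (v+1+1)).isLt
    have b4 := (c (v+1+1+1)).isLt
    exact Fin.ext (by omega)
  have periodic : ∀ (t : ℕ) (v : Fin (m+2)), c (v + ((3*t : ℕ) : Fin (m+2))) = c v := by
    intro t
    induction t with
    | zero => intro v; simp
    | succ t ih =>
      intro v
      have hc3 : ((3*(t+1) : ℕ) : Fin (m+2)) = ((3*t : ℕ) : Fin (m+2)) + 1 + 1 + 1 := by
        push_cast; ring
      rw [hc3]
      have ha : v + (((3*t : ℕ) : Fin (m+2)) + 1 + 1 + 1)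
          = (v + ((3*t : ℕ) : Fin (m+2))) + 1 + 1 + 1 := by ring
      rw [ha, step, ih]
  have hzero : ((m+2 : ℕ) : Fin (m+2)) = 0 := Fin.natCast_self _
  rcases (by omega : (m+2) % 3 = 1 ∨ (m+2) % 3 = 2) with hr | hr
  · have hq : 3 * ((m+2)/3) = m + 1 := by omega
    have eq1 := periodic ((m+2)/3) 0
    rw [hq] at eq1
    have hm1 : ((m+1 : ℕ) : Fin (m+2)) + 1 = 0 := by
      calc ((m+1 : ℕ) : Fin (m+2)) + 1 = ((m+1+1 : ℕ) : Fin (m+2)) := by push_cast; ring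
        _ = 0 := hzero
    have hw : (0 + ((m+1:ℕ) : Fin (m+2))) + 1 = 0 := by rw [zero_add, hm1]
    have hD := D1 (0 + ((m+1:ℕ) : Fin (m+2)))
    rw [hw, eq1] at hD
    exact hD rfl
  · have hq : 3 * ((m+2)/3 + 1) = m + 3 := by omega
    have eq1 := periodic ((m+2)/3 + 1) 0
    rw [hq] at eq1
    have hone : ((m+3 : ℕ) : Fin (m+2)) = 1 := by
      calc ((m+3 : ℕ) : Fin (m+2)) = ((m+2 : ℕ) : Fin (m+2)) + 1 := by push_cast; ring
        _ = 1 := by rw [hzero, zero_add]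
    rw [hone] at eq1
    exact D1 0 eq1.symm

lemma condChrom_cycle {N : ℕ} (hN : 6 ≤ N) : condChrom (cycleGraph N) 2 = patV N := by
  refine condChrom_eq _ _ _ ⟨cpat N, cpat_isCond hN⟩ ?_
  intro k c hc
  by_cases h3 : N % 3 = 0
  · have := cyc_lb3 hN k c hc
    unfold patV; rw [if_pos h3]; omega
  · have := cyc_lb4 hN h3 k c hc
    unfold patV; rw [if_neg h3]; omega

/-! ### Generic hub lower bound for the gear graph -/

variable {n : ℕ}

lemma three_le_ncard_image {V β : Type*} [Finite β] {G : SimpleGraph V} {c : V → β} {v : V}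
    {w1 w2 w3 : V} (h1 : G.Adj v w1) (h2 : G.Adj v w2) (h3 : G.Adj v w3)
    (d12 : c w1 ≠ c w2) (d13 : c w1 ≠ c w3) (d23 : c w2 ≠ c w3) :
    3 ≤ (c '' G.neighborSet v).ncard := by
  have h : 2 < (c '' G.neighborSet v).ncard := by
    rw [Set.two_lt_ncard (Set.toFinite _)]
    exact ⟨c w1, Set.mem_image_of_mem c h1, c w2, Set.mem_image_of_mem c h2,
      c w3, Set.mem_image_of_mem c h3, d12, d13, d23⟩
  omega

lemma gear_hub_lb (hn : 3 ≤ n) (r : ℕ) :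
    ∀ (k : ℕ) (c : Option (Fin (2*n)) → Fin k), IsCondColoring (gearGraph n) r c →
      min n r + 1 ≤ k := by
  rintro k c ⟨hsurj, hprop, hcond⟩
  have hk0 : 0 < k := (c none).pos
  have h := hcond none
  rw [gDeg_none hn] at h
  have hsub : c '' (gearGraph n).neighborSet none ⊆ Set.univ \ {c none} := by
    rintro _ ⟨w, hw, rfl⟩
    refine ⟨Set.mem_univ _, ?_⟩
    simp only [Set.mem_singleton_iff]
    exact fun he => hprop hw he.symm
  have hcard : (Set.univ \ {c none} : Set (Fin k)).ncard = k - 1 := by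
    rw [Set.ncard_diff_singleton_of_mem (Set.mem_univ _), Set.ncard_univ,
      Nat.card_eq_fintype_card, Fintype.card_fin]
  have hle := Set.ncard_le_ncard hsub (Set.toFinite _)
  omega

lemma nbr2_nbr1 (hn : 3 ≤ n) (i : Fin (2*n)) : nbr2 (nbr1 i) = i := by
  have hi := i.isLt
  apply Fin.ext
  show ((i.val + 1) % (2*n) + (2*n - 1)) % (2*n) = i.val
  have h1 := mod2N (x := i.val + 1) (N := 2*n) (by omega) (by omega)
  have h2 := mod2N (x := (i.val + 1) % (2*n) + (2*n - 1)) (N := 2*n)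
    (by rw [h1]; split_ifs <;> omega) (by omega)
  rw [h2, h1]
  split_ifs <;> omega

lemma nbr2_plus2 (hn : 3 ≤ n) (i : Fin (2*n)) :
    ((nbr2 i).val + 2) % (2*n) = (nbr1 i).val := by
  have hi := i.isLt
  show ((i.val + (2*n - 1)) % (2*n) + 2) % (2*n) = (i.val + 1) % (2*n)
  have h1 := mod2N (x := i.val + (2*n - 1)) (N := 2*n) (by omega) (by omega)
  have h2 := mod2N (x := (i.val + (2*n - 1)) % (2*n) + 2) (N := 2*n)
    (by rw [h1]; split_ifs <;> omega) (by omega)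
  have h3 := mod2N (x := i.val + 1) (N := 2*n) (by omega) (by omega)
  rw [h2, h1, h3]
  split_ifs <;> omega

/-! ### Cycle lemmas for general N -/

lemma cyc_adj_iff' {N : ℕ} (hN : 6 ≤ N) {v w : Fin N} :
    (cycleGraph N).Adj v w ↔ w = nbr1 v ∨ v = nbr1 w := by
  obtain ⟨m, rfl⟩ : ∃ m, N = m + 2 := ⟨N - 2, by omega⟩
  rw [cyc_adj_iff, add_one_eq_nbr1, add_one_eq_nbr1]

lemma cyc_ns' {N : ℕ} (hN : 6 ≤ N) (v : Fin N) :
    (cycleGraph N).neighborSet v = {nbr2 v, nbr1 v} := by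
  obtain ⟨m, rfl⟩ : ∃ m, N = m + 2 := ⟨N - 2, by omega⟩
  rw [cycleGraph_neighborSet, sub_one_eq_nbr2, add_one_eq_nbr1]

lemma cyc_gDeg' {N : ℕ} (hN : 6 ≤ N) (v : Fin N) : gDeg (cycleGraph N) v = 2 := by
  obtain ⟨m, rfl⟩ : ∃ m, N = m + 2 := ⟨N - 2, by omega⟩
  exact cyc_gDeg (by omega) v

/-! ### The pat-based coloring of the gear graph -/

def colP (n : ℕ) : Option (Fin (2*n)) → Fin (patV (2*n) + 1)
  | none => ⟨patV (2*n), Nat.lt_succ_self _⟩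
  | some i => ⟨pat (2*n) i.val % patV (2*n),
      by have := Nat.mod_lt (pat (2*n) i.val) (patV_pos (2*n)); omega⟩

lemma colP_none : (colP n none).val = patV (2*n) := rfl

lemma colP_some (hn : 3 ≤ n) (i : Fin (2*n)) :
    (colP n (some i)).val = pat (2*n) i.val :=
  Nat.mod_eq_of_lt (pat_lt (by omega) i.isLt)

lemma colP_hub_ne (hn : 3 ≤ n) (j : Fin (2*n)) : colP n none ≠ colP n (some j) := by
  rw [Ne, Fin.ext_iff, colP_none, colP_some hn]
  have := pat_lt (N := 2*n) (by omega) j.isLt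
  omega

lemma colP_rim (hn : 3 ≤ n) (i : Fin (2*n)) :
    colP n (some i) ≠ colP n (some (nbr1 i)) := by
  rw [Ne, Fin.ext_iff, colP_some hn, colP_some hn]
  exact pat_d1 (by omega) i.isLt

lemma colP_pair (hn : 3 ≤ n) (i : Fin (2*n)) :
    colP n (some (nbr2 i)) ≠ colP n (some (nbr1 i)) := by
  rw [Ne, Fin.ext_iff, colP_some hn, colP_some hn]
  rw [← nbr2_plus2 hn i]
  exact pat_d2 (by omega) (nbr2 i).isLt

lemma colP_proper (hn : 3 ≤ n) : ∀ ⦃u v⦄, (gearGraph n).Adj u v → colP n u ≠ colP n v := by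
  rintro (_ | i) (_ | j) hadj
  · exact hadj.elim
  · exact colP_hub_ne hn j
  · exact (colP_hub_ne hn i).symm
  · rw [adj_some_iff hn] at hadj
    rcases hadj with rfl | rfl
    · exact colP_rim hn i
    · exact fun h => colP_rim hn (nbr2 i) (by rw [nbr1_nbr2 hn]; exact h.symm)

lemma colP_isCond (hn : 3 ≤ n) (r : ℕ) (hr : min n r ≤ 3) :
    IsCondColoring (gearGraph n) r (colP n) := by
  have hN6 : 6 ≤ 2*n := by omega
  refine ⟨?_, colP_proper hn, ?_⟩
  · -- surjective
    intro x
    have hx := x.isLt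
    have hV3 := patV_ge (2*n)
    have hV4 := patV_le (2*n)
    by_cases hxe : x.val = patV (2*n)
    · exact ⟨none, Fin.ext (by rw [colP_none, hxe])⟩
    · rcases (by omega : x.val = 0 ∨ x.val = 1 ∨ x.val = 2 ∨ x.val = 3) with h|h|h|h
      · refine ⟨some ⟨0, by omega⟩, Fin.ext ?_⟩
        rw [colP_some hn, h]
        show pat (2*n) 0 = 0
        exact pat_0 hN6
      · refine ⟨some ⟨1, by omega⟩, Fin.ext ?_⟩
        rw [colP_some hn, h]
        show pat (2*n) 1 = 1
        exact pat_1 hN6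
      · refine ⟨some ⟨2, by omega⟩, Fin.ext ?_⟩
        rw [colP_some hn, h]
        show pat (2*n) 2 = 2
        exact pat_2 hN6
      · have h3 : (2*n) % 3 ≠ 0 := by
          intro hc
          have hV : patV (2*n) = 3 := by unfold patV; rw [if_pos hc]
          omega
        refine ⟨some ⟨2*n - 1, by omega⟩, Fin.ext ?_⟩
        rw [colP_some hn, h]
        show pat (2*n) (2*n - 1) = 3
        exact pat_top hN6 h3
  · -- C2
    intro v
    rcases v with _ | i
    · -- hub: three colors among the spokes
      rw [gDeg_none hn]
      have h0lt : (0:ℕ) < 2*n := by omega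
      have h2lt : (2:ℕ) < 2*n := by omega
      have v0 : (colP n (some ⟨0, h0lt⟩)).val = 0 := by
        rw [colP_some hn]; exact pat_0 hN6
      have v2 : (colP n (some ⟨2, h2lt⟩)).val = 2 := by
        rw [colP_some hn]; exact pat_2 hN6
      have a1 : (gearGraph n).Adj none (some ⟨0, h0lt⟩) := adj_none_some.mpr (by norm_num)
      have a2 : (gearGraph n).Adj none (some ⟨2, h2lt⟩) := adj_none_some.mpr (by norm_num)
      have d1 : colP n (some ⟨0, h0lt⟩) ≠ colP n (some ⟨2, h2lt⟩) := by
        rw [Ne, Fin.ext_iff, v0, v2]; omega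
      have key : 3 ≤ (colP n '' (gearGraph n).neighborSet none).ncard := by
        rcases pat_46 hN6 with hp | ⟨hp, hp7⟩
        · have h4lt : (4:ℕ) < 2*n := by omega
          have v4 : (colP n (some ⟨4, h4lt⟩)).val = 1 := by
            rw [colP_some hn]; exact hp
          have a3 : (gearGraph n).Adj none (some ⟨4, h4lt⟩) := adj_none_some.mpr (by norm_num)
          have d2 : colP n (some ⟨0, h0lt⟩) ≠ colP n (some ⟨4, h4lt⟩) := by
            rw [Ne, Fin.ext_iff, v0, v4]; omega
          have d3 : colP n (some ⟨2, h2lt⟩) ≠ colP n (some ⟨4, h4lt⟩) := by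
            rw [Ne, Fin.ext_iff, v2, v4]; omega
          exact three_le_ncard_image a1 a2 a3 d1 d2 d3
        · have h6lt : (6:ℕ) < 2*n := by omega
          have v6 : (colP n (some ⟨6, h6lt⟩)).val = 1 := by
            rw [colP_some hn]; exact hp
          have a3 : (gearGraph n).Adj none (some ⟨6, h6lt⟩) := adj_none_some.mpr (by norm_num)
          have d2 : colP n (some ⟨0, h0lt⟩) ≠ colP n (some ⟨6, h6lt⟩) := by
            rw [Ne, Fin.ext_iff, v0, v6]; omega
          have d3 : colP n (some ⟨2, h2lt⟩) ≠ colP n (some ⟨6, h6lt⟩) := by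
            rw [Ne, Fin.ext_iff, v2, v6]; omega
          exact three_le_ncard_image a1 a2 a3 d1 d2 d3
      omega
    · rcases Nat.mod_two_eq_zero_or_one i.val with he | he
      · -- spoke
        rw [gDeg_even hn he, ns_some_even hn he, Set.image_insert_eq, Set.image_insert_eq,
          Set.image_singleton]
        have d1 := colP_hub_ne hn (nbr1 i)
        have d2 := colP_hub_ne hn (nbr2 i)
        have d3 := (colP_pair hn i).symm
        rw [Set.ncard_insert_of_notMem (by simp [d1, d2]) (Set.toFinite _),
          Set.ncard_pair d3]
        exact le_trans (min_le_left _ _) (le_refl 3)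
      · -- rim odd vertex
        rw [gDeg_odd hn he, ns_some_odd hn he, Set.image_insert_eq, Set.image_singleton,
          Set.ncard_pair ((colP_pair hn i).symm)]
        exact min_le_left _ _


lemma gear_pair_ne (hn : 3 ≤ n) {k : ℕ} {c : Option (Fin (2*n)) → Fin k}
    (hcond : ∀ v, min (gDeg (gearGraph n) v) 3 ≤ (c '' (gearGraph n).neighborSet v).ncard)
    (i : Fin (2*n)) : c (some (nbr2 i)) ≠ c (some (nbr1 i)) := by
  rcases Nat.mod_two_eq_zero_or_one i.val with he | he
  · have h := hcond (some i)
    rw [gDeg_even hn he, ns_some_even hn he, Set.image_insert_eq, Set.image_insert_eq,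
      Set.image_singleton, min_self] at h
    exact (distinct_of_triple_ncard h).2.2.symm
  · have h := hcond (some i)
    rw [gDeg_odd hn he, ns_some_odd hn he, Set.image_insert_eq, Set.image_singleton,
      min_eq_left (by omega)] at h
    exact (ne_of_pair_ncard h).symm

lemma gear3_lb4 (hn : 3 ≤ n) (h3 : (2*n) % 3 ≠ 0) :
    ∀ (k : ℕ) (c : Option (Fin (2*n)) → Fin k), IsCondColoring (gearGraph n) 3 c → 5 ≤ k := by
  intro k c hc
  have hN6 : 6 ≤ 2*n := by omega
  have h4 : 4 ≤ k := by have := gear_hub_lb hn 3 k c hc; omega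
  obtain ⟨k', rfl⟩ : ∃ k', k = k' + 1 := ⟨k - 1, by omega⟩
  obtain ⟨hsurj, hprop, hcond⟩ := hc
  -- no rim vertex has the hub's color
  have hrim : ∀ i : Fin (2*n), c (some i) ≠ c none := by
    intro i
    rcases Nat.mod_two_eq_zero_or_one i.val with he | he
    · exact fun h => hprop (adj_none_some.mpr he) h.symm
    · -- i is odd; look at the spoke nbr1 i
      have hev : (nbr1 i).val % 2 = 0 := by
        rw [val_nbr1 hn]; have := i.isLt; split_ifs <;> omega
      have h := hcond (some (nbr1 i))
      rw [gDeg_even hn hev, ns_some_even hn hev, Set.image_insert_eq, Set.image_insert_eq,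
        Set.image_singleton, min_self] at h
      have hd := (distinct_of_triple_ncard h).2.1
      rw [nbr2_nbr1 hn] at hd
      exact fun he => hd he.symm
  set a := c none with ha
  set e := finSuccEquiv' a with hee
  have hsome : ∀ i : Fin (2*n), (e (c (some i))).isSome := by
    intro i
    rcases h : e (c (some i)) with _ | y
    · exfalso
      have : c (some i) = a := by
        have := congrArg e.symm h
        rw [Equiv.symm_apply_apply, finSuccEquiv'_symm_none] at this
        exact this
      exact hrim i this
    · rfl
  set c' : Fin (2*n) → Fin k' := fun v => (e (c (some v))).get (hsome v) with hc'
  have hc'e : ∀ v, some (c' v) = e (c (some v)) := fun v => Option.some_get _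
  have hinj : ∀ u w, c' u = c' w → c (some u) = c (some w) := by
    intro u w h
    have h2 : e (c (some u)) = e (c (some w)) := by
      rw [← hc'e u, ← hc'e w, h]
    exact e.injective h2
  have hcyc : IsCondColoring (cycleGraph (2*n)) 2 c' := by
    refine ⟨?_, ?_, ?_⟩
    · intro y
      obtain ⟨v, hv⟩ := hsurj (e.symm (some y))
      rcases v with _ | w
      · exfalso
        have h2 : e a = some y := by rw [ha, hv, Equiv.apply_symm_apply]
        rw [hee, finSuccEquiv'_at] at h2
        exact nomatch h2
      · refine ⟨w, ?_⟩
        have h2 : some (c' w) = some y := by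
          rw [hc'e w, hv, Equiv.apply_symm_apply]
        exact Option.some_injective _ h2
    · intro u w hadj
      rcases (cyc_adj_iff' hN6).mp hadj with rfl | rfl
      · exact fun h => hprop ((adj_some_iff hn).mpr (Or.inl rfl)) (hinj _ _ h)
      · exact fun h =>
          hprop ((adj_some_iff hn).mpr (Or.inl rfl)) (hinj _ _ h.symm)
    · intro v
      rw [cyc_gDeg' hN6, cyc_ns' hN6, Set.image_insert_eq, Set.image_singleton, min_self]
      have hd : c' (nbr2 v) ≠ c' (nbr1 v) :=
        fun h => gear_pair_ne hn hcond v (hinj _ _ h)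
      rw [Set.ncard_pair hd]
  have := cyc_lb4 hN6 h3 k' c' hcyc
  omega

lemma condChrom_gear3 (hn : 3 ≤ n) : condChrom (gearGraph n) 3 = patV (2*n) + 1 := by
  refine condChrom_eq _ _ _ ⟨colP n, colP_isCond hn 3 (by omega)⟩ ?_
  intro k c hc
  by_cases h3 : (2*n) % 3 = 0
  · have := gear_hub_lb hn 3 k c hc
    unfold patV; rw [if_pos h3]; omega
  · have := gear3_lb4 hn h3 k c hc
    unfold patV; rw [if_neg h3]; omega

/-! ### The (m+1, r)-coloring of the gear graph for r ≥ 4 -/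

def sColM (n m j : ℕ) : ℕ := if j < m then j else if (n - 1 - j) % 2 = 0 then 1 else 0

def oColM (n m j : ℕ) : ℕ :=
  if j < m - 2 then j + 2
  else if j = m - 2 then 0
  else if m = 4 ∧ j = 3 ∧ (n - 4) % 2 = 0 then 1
  else if (n - 1 - j) % 2 = 0 then 3 else 2

lemma sColM_lt {n m j : ℕ} (hm : 4 ≤ m) (hj : j < m ∨ True) : sColM n m j < m := by
  unfold sColM; split_ifs <;> omega

lemma oColM_lt {n m j : ℕ} (hm : 4 ≤ m) : oColM n m j < m := by
  unfold oColM; split_ifs <;> omega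

lemma M1 {n m : ℕ} (hm : 4 ≤ m) (hmn : m ≤ n) {j : ℕ} (hj : j < n) :
    sColM n m j ≠ sColM n m ((j+1) % n) := by
  have hmod := mod2N (x := j+1) (N := n) (by omega) (by omega)
  unfold sColM
  rw [hmod]
  split_ifs <;> omega

lemma M2 {n m : ℕ} (hm : 4 ≤ m) (hmn : m ≤ n) {j : ℕ} (hj : j < n) :
    sColM n m j ≠ oColM n m j := by
  unfold sColM oColM
  split_ifs <;> omega

lemma M3 {n m : ℕ} (hm : 4 ≤ m) (hmn : m ≤ n) {j : ℕ} (hj : j < n) :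
    oColM n m j ≠ sColM n m ((j+1) % n) := by
  have hmod := mod2N (x := j+1) (N := n) (by omega) (by omega)
  unfold sColM oColM
  rw [hmod]
  split_ifs <;> omega

lemma M4 {n m : ℕ} (hm : 4 ≤ m) (hmn : m ≤ n) {j : ℕ} (hj : j < n) :
    oColM n m j ≠ oColM n m ((j+1) % n) := by
  have hmod := mod2N (x := j+1) (N := n) (by omega) (by omega)
  unfold oColM
  rw [hmod]
  split_ifs <;> omega

def colM (n m : ℕ) : Option (Fin (2*n)) → Fin (m+1)
  | none => ⟨m, Nat.lt_succ_self m⟩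
  | some i => ⟨(if i.val % 2 = 0 then sColM n m (i.val/2) else oColM n m (i.val/2)) % (m+1),
      Nat.mod_lt _ (by omega)⟩

lemma colM_none {n m : ℕ} : (colM n m none).val = m := rfl

lemma colM_even {n m : ℕ} (hm : 4 ≤ m) {i : Fin (2*n)} (h : i.val % 2 = 0) :
    (colM n m (some i)).val = sColM n m (i.val / 2) := by
  show (if i.val % 2 = 0 then sColM n m (i.val/2) else oColM n m (i.val/2)) % (m+1) = _
  rw [if_pos h]
  exact Nat.mod_eq_of_lt (by have := sColM_lt (n := n) (j := i.val/2) hm (Or.inr trivial); omega)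

lemma colM_odd {n m : ℕ} (hm : 4 ≤ m) {i : Fin (2*n)} (h : i.val % 2 = 1) :
    (colM n m (some i)).val = oColM n m (i.val / 2) := by
  show (if i.val % 2 = 0 then sColM n m (i.val/2) else oColM n m (i.val/2)) % (m+1) = _
  rw [if_neg (by omega)]
  exact Nat.mod_eq_of_lt (by have := oColM_lt (n := n) (j := i.val/2) hm; omega)

variable {n m : ℕ}

lemma colM_hub_ne (hn : 3 ≤ n) (hm : 4 ≤ m) (j : Fin (2*n)) :
    colM n m none ≠ colM n m (some j) := by
  rw [Ne, Fin.ext_iff, colM_none]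
  rcases Nat.mod_two_eq_zero_or_one j.val with he | he
  · rw [colM_even hm he]
    have := sColM_lt (n := n) (j := j.val/2) hm (Or.inr trivial); omega
  · rw [colM_odd hm he]
    have := oColM_lt (n := n) (j := j.val/2) hm; omega

lemma colM_rim (hn : 3 ≤ n) (hm : 4 ≤ m) (hmn : m ≤ n) (i : Fin (2*n)) :
    colM n m (some i) ≠ colM n m (some (nbr1 i)) := by
  have hi := i.isLt
  have h1 := val_nbr1 hn i
  rw [Ne, Fin.ext_iff]
  rcases Nat.mod_two_eq_zero_or_one i.val with he | he
  · have hodd : (nbr1 i).val % 2 = 1 := by rw [h1]; split_ifs <;> omega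
    rw [colM_even hm he, colM_odd hm hodd, h1]
    have hlt : i.val + 1 < 2*n := by omega
    rw [if_pos hlt]
    have hq : (i.val + 1) / 2 = i.val / 2 := by omega
    rw [hq]
    exact M2 hm hmn (by omega)
  · have hev : (nbr1 i).val % 2 = 0 := by rw [h1]; split_ifs <;> omega
    rw [colM_odd hm he, colM_even hm hev, h1]
    have hmod := mod2N (x := i.val/2 + 1) (N := n) (by omega) (by omega)
    have key : (if i.val + 1 < 2*n then i.val + 1 else 0) / 2 = (i.val / 2 + 1) % n := by
      rw [hmod]; split_ifs <;> omega
    rw [key]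
    exact M3 hm hmn (by omega)

lemma colM_spokes_ne (hn : 3 ≤ n) (hm : 4 ≤ m) (hmn : m ≤ n) {i : Fin (2*n)}
    (he : i.val % 2 = 1) :
    colM n m (some (nbr2 i)) ≠ colM n m (some (nbr1 i)) := by
  have hi := i.isLt
  have h1 := val_nbr1 hn i
  have h2 := val_nbr2 hn i
  have hev2 : (nbr2 i).val % 2 = 0 := by rw [h2]; split_ifs <;> omega
  have hev1 : (nbr1 i).val % 2 = 0 := by rw [h1]; split_ifs <;> omega
  rw [Ne, Fin.ext_iff, colM_even hm hev2, colM_even hm hev1, h1, h2]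
  have hmod := mod2N (x := (i.val - 1)/2 + 1) (N := n) (by omega) (by omega)
  have key : (if i.val + 1 < 2*n then i.val + 1 else 0) / 2 = ((i.val - 1) / 2 + 1) % n := by
    rw [hmod]; split_ifs <;> omega
  have h0 : (if i.val = 0 then 2*n-1 else i.val - 1) = i.val - 1 := by split_ifs <;> omega
  rw [key, h0]
  exact M1 hm hmn (by omega)

lemma colM_odds_ne (hn : 3 ≤ n) (hm : 4 ≤ m) (hmn : m ≤ n) {i : Fin (2*n)}
    (he : i.val % 2 = 0) :
    colM n m (some (nbr2 i)) ≠ colM n m (some (nbr1 i)) := by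
  have hi := i.isLt
  have h1 := val_nbr1 hn i
  have h2 := val_nbr2 hn i
  have hod2 : (nbr2 i).val % 2 = 1 := by rw [h2]; split_ifs <;> omega
  have hod1 : (nbr1 i).val % 2 = 1 := by rw [h1]; split_ifs <;> omega
  rw [Ne, Fin.ext_iff, colM_odd hm hod2, colM_odd hm hod1, h1, h2]
  -- the odd index of nbr2 is q with (q+1) % n = odd index of nbr1
  set q := (if i.val = 0 then 2*n-1 else i.val - 1) / 2 with hq
  have hmod := mod2N (x := q + 1) (N := n) (by rw [hq]; split_ifs <;> omega) (by omega)
  have key : (if i.val + 1 < 2*n then i.val + 1 else 0) / 2 = (q + 1) % n := by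
    rw [hmod, hq]; split_ifs <;> omega
  rw [key]
  refine M4 hm hmn ?_
  rw [hq]; split_ifs <;> omega

lemma colM_proper (hn : 3 ≤ n) (hm : 4 ≤ m) (hmn : m ≤ n) :
    ∀ ⦃u v⦄, (gearGraph n).Adj u v → colM n m u ≠ colM n m v := by
  rintro (_ | i) (_ | j) hadj
  · exact hadj.elim
  · exact colM_hub_ne hn hm j
  · exact (colM_hub_ne hn hm i).symm
  · rw [adj_some_iff hn] at hadj
    rcases hadj with rfl | rfl
    · exact colM_rim hn hm hmn i
    · exact fun h => colM_rim hn hm hmn (nbr2 i) (by rw [nbr1_nbr2 hn]; exact h.symm)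

lemma colM_isCond (hn : 3 ≤ n) (hm : 4 ≤ m) (hmn : m ≤ n) (r : ℕ) (hr : min n r ≤ m) :
    IsCondColoring (gearGraph n) r (colM n m) := by
  have hsp : ∀ t : ℕ, t < m → ∀ (h2t : 2*t < 2*n), (colM n m (some ⟨2*t, h2t⟩)).val = t := by
    intro t ht h2t
    have hval : (colM n m (some ⟨2*t, h2t⟩)).val = sColM n m ((2*t)/2) :=
      colM_even hm (by show 2*t % 2 = 0; omega)
    have hqq : (2*t)/2 = t := by omega
    rw [hval, hqq]
    unfold sColM
    rw [if_pos ht]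
  refine ⟨?_, colM_proper hn hm hmn, ?_⟩
  · intro x
    have hx := x.isLt
    by_cases hxe : x.val = m
    · exact ⟨none, Fin.ext (by rw [colM_none, hxe])⟩
    · have hlt : 2*x.val < 2*n := by omega
      exact ⟨some ⟨2*x.val, hlt⟩, Fin.ext (hsp x.val (by omega) hlt)⟩
  · intro v
    rcases v with _ | i
    · -- hub
      rw [gDeg_none hn]
      have key : m ≤ (colM n m '' (gearGraph n).neighborSet none).ncard := by
        set f : Fin m → Fin (m+1) :=
          fun t => colM n m (some ⟨2*t.val, by have := t.isLt; omega⟩) with hf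
        have hval : ∀ t : Fin m, (f t).val = t.val := by
          intro t
          rw [hf]
          exact hsp t.val t.isLt _
        have hinj : Function.Injective f := by
          intro a b hab
          have : (f a).val = (f b).val := by rw [hab]
          rw [hval, hval] at this
          exact Fin.ext this
        have hsub : Set.range f ⊆ colM n m '' (gearGraph n).neighborSet none := by
          rintro _ ⟨t, rfl⟩
          exact Set.mem_image_of_mem _ (adj_none_some.mpr (by show 2*t.val % 2 = 0; omega))
        calc m = Nat.card (Fin m) := by simp
          _ = Nat.card (Set.range f) := (Nat.card_range_of_injective hinj).symm
          _ = (Set.range f).ncard := Nat.card_coe_set_eq _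
          _ ≤ _ := Set.ncard_le_ncard hsub (Set.toFinite _)
      omega
    · rcases Nat.mod_two_eq_zero_or_one i.val with he | he
      · -- spoke
        rw [gDeg_even hn he, ns_some_even hn he, Set.image_insert_eq, Set.image_insert_eq,
          Set.image_singleton]
        have d1 := colM_hub_ne hn hm (nbr1 i)
        have d2 := colM_hub_ne hn hm (nbr2 i)
        have d3 := (colM_odds_ne hn hm hmn he).symm
        rw [Set.ncard_insert_of_notMem (by simp [d1, d2]) (Set.toFinite _),
          Set.ncard_pair d3]
        exact min_le_left _ _
      · -- rim odd vertex
        rw [gDeg_odd hn he, ns_some_odd hn he, Set.image_insert_eq, Set.image_singleton,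
          Set.ncard_pair ((colM_spokes_ne hn hm hmn he).symm)]
        exact min_le_left _ _

lemma condChrom_gearR (hn : 3 ≤ n) (r : ℕ) (hr : 4 ≤ r) :
    condChrom (gearGraph n) r = min r n + 1 := by
  by_cases h3 : n = 3
  · subst h3
    have hmin : min r 3 = 3 := by omega
    rw [hmin]
    refine condChrom_eq _ _ _ ⟨colP 3, colP_isCond (by norm_num) r (by omega)⟩ ?_
    intro k c hc
    have := gear_hub_lb (by norm_num) r k c hc
    omega
  · have h4 : 4 ≤ min r n := by omega
    have hmn : min r n ≤ n := min_le_right r n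
    refine condChrom_eq _ _ _ ⟨colM n (min r n), colM_isCond hn h4 hmn r (by omega)⟩ ?_
    intro k c hc
    have := gear_hub_lb hn r k c hc
    omega

end GearAux

/-- For `n ≥ 3`, the `n`-gear graph `G_n` has maximum degree `Δ = n`, and
`χ_2(G_n) = 4`, `χ_3(G_n) = χ_2(C_{2n}) + 1`, and `χ_r(G_n) = min {r, Δ} + 1` for `r ≥ 4`. -/
theorem condChrom_gear (n : ℕ) (hn : 3 ≤ n) :
    gMaxDeg (gearGraph n) = n ∧
    condChrom (gearGraph n) 2 = 4 ∧
    condChrom (gearGraph n) 3 = condChrom (cycleGraph (2 * n)) 2 + 1 ∧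
    (∀ r, 4 ≤ r → condChrom (gearGraph n) r = min r n + 1) := by
  refine ⟨GearAux.gMaxDeg_gear hn, GearAux.condChrom_gear2 hn, ?_,
    fun r hr => GearAux.condChrom_gearR hn r hr⟩
  rw [GearAux.condChrom_gear3 hn, GearAux.condChrom_cycle (by omega : 6 ≤ 2*n)]
end

section
/- If G is a uniquely p-colorable (finite simple) graph and 0 < r ≤ p − 1, then χ_r(G) = p. -/
open SimpleGraph

/-- A proper coloring of `G` with colors in `Fin k` (condition (C1)). -/
def IsProperColoring {V : Type*} {k : ℕ} (G : SimpleGraph V) (c : V → Fin k) : Prop :=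
  ∀ ⦃u v⦄, G.Adj u v → c u ≠ c v

/-- Two colorings induce the same partition of the vertex set. -/
def SamePartition {V : Type*} {k : ℕ} (c₁ c₂ : V → Fin k) : Prop :=
  ∀ u v, c₁ u = c₁ v ↔ c₂ u = c₂ v

/-- `G` is uniquely `p`-colorable: its chromatic number is `p` and every proper `p`-coloring
induces the same partition of the vertex set. -/
def UniquelyColorable {V : Type*} (G : SimpleGraph V) (p : ℕ) : Prop :=
  G.chromaticNumber = (p : ℕ∞) ∧
  ∀ c₁ c₂ : V → Fin p, IsProperColoring G c₁ → IsProperColoring G c₂ → SamePartition c₁ c₂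

/-- `G` is uniquely `(k,r)`-colorable: `χ_r(G) = k` and every conditional `(k,r)`-coloring
induces the same partition of the vertex set. -/
def UniquelyCondColorable {V : Type*} (G : SimpleGraph V) (k r : ℕ) : Prop :=
  condChrom G r = k ∧
  ∀ c₁ c₂ : V → Fin k, IsCondColoring G r c₁ → IsCondColoring G r c₂ → SamePartition c₁ c₂

/-- If `G` is uniquely `p`-colorable and `0 < r ≤ p - 1`, then
`χ_r(G) = p`. -/
theorem condChrom_of_uniquelyColorable {V : Type*} [Fintype V] (G : SimpleGraph V) (p r : ℕ)
    (hG : UniquelyColorable G p) (hr : 0 < r) (hr' : r ≤ p - 1) :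
    condChrom G r = p := by
  classical
  obtain ⟨hchi, huniq⟩ := hG
  have hp2 : 2 ≤ p := by omega
  have hcol : G.Colorable p :=
    SimpleGraph.chromaticNumber_le_iff_colorable.mp (le_of_eq hchi)
  obtain ⟨C⟩ := hcol
  -- surjectivity of C
  have hsurj : Function.Surjective (fun v => C v) := by
    by_contra h
    rw [Function.Surjective] at h
    push_neg at h
    obtain ⟨i, hi⟩ := h
    have C' : G.Coloring {j : Fin p // j ≠ i} :=
      SimpleGraph.Coloring.mk (fun v => ⟨C v, hi v⟩)
        (fun {u w} hadj => by simpa [Subtype.ext_iff] using C.valid hadj)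
    have hc' : G.Colorable (p - 1) := by
      have := C'.colorable
      have hcard : Fintype.card {j : Fin p // j ≠ i} = p - 1 := by
        simp [Fintype.card_subtype_compl]
      rwa [hcard] at this
    have hle := hc'.chromaticNumber_le
    rw [hchi] at hle
    have : p ≤ p - 1 := by exact_mod_cast hle
    omega
  -- key recoloring claim
  have key : ∀ v (i : Fin p), i ≠ C v → ∃ u ∈ G.neighborSet v, C u = i := by
    intro v i hiv
    by_contra h
    push_neg at h
    set c₂ : V → Fin p := Function.update (fun x => C x) v i with hc₂
    have hprop₁ : IsProperColoring G (fun x => C x) := fun u w hadj => C.valid hadj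
    have hprop₂ : IsProperColoring G c₂ := by
      intro u w hadj
      by_cases hu : u = v
      · subst hu
        have hw : w ≠ u := (G.ne_of_adj hadj).symm
        simp only [hc₂, Function.update_self, Function.update_of_ne hw]
        exact fun hc => h w hadj hc.symm
      · by_cases hw : w = v
        · subst hw
          simp only [hc₂, Function.update_self, Function.update_of_ne hu]
          exact fun hc => h u (G.adj_symm hadj) hc
        · simp only [hc₂, Function.update_of_ne hu, Function.update_of_ne hw]
          exact C.valid hadj
    have hsame := huniq _ _ hprop₁ hprop₂
    obtain ⟨u, hu⟩ := hsurj i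
    have huv : u ≠ v := fun he => hiv (by rw [← hu, he])
    have : c₂ u = c₂ v := by
      simp [hc₂, Function.update_of_ne huv, hu]
    have := (hsame u v).mpr this
    exact hiv (by rw [← hu, this])
  -- neighborhood color count
  have hnb : ∀ v, (p - 1 : ℕ) ≤ ((fun x => C x) '' G.neighborSet v).ncard := by
    intro v
    have hsub : ({C v}ᶜ : Set (Fin p)) ⊆ (fun x => C x) '' G.neighborSet v := by
      intro i hi
      obtain ⟨u, hu, hcu⟩ := key v i hi
      exact ⟨u, hu, hcu⟩
    have hcard : ({C v}ᶜ : Set (Fin p)).ncard = p - 1 := by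
      have h1 := Set.ncard_add_ncard_compl ({C v} : Set (Fin p))
      rw [Set.ncard_singleton] at h1
      have h2 : Nat.card (Fin p) = p := by simp
      omega
    calc (p - 1 : ℕ) = ({C v}ᶜ : Set (Fin p)).ncard := hcard.symm
      _ ≤ ((fun x => C x) '' G.neighborSet v).ncard :=
        Set.ncard_le_ncard hsub (Set.toFinite _)
  have hcond : IsCondColoring G r (fun v => C v) := by
    refine ⟨hsurj, fun u w hadj => C.valid hadj, fun v => ?_⟩
    calc min (gDeg G v) r ≤ r := min_le_right _ _
      _ ≤ p - 1 := hr'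
      _ ≤ _ := hnb v
  have hmem : p ∈ {k : ℕ | ∃ c : V → Fin k, IsCondColoring G r c} := ⟨_, hcond⟩
  have hlb : ∀ k ∈ {k : ℕ | ∃ c : V → Fin k, IsCondColoring G r c}, p ≤ k := by
    rintro k ⟨c, hcsurj, hcprop, -⟩
    have hck : G.Colorable k := ⟨SimpleGraph.Coloring.mk c fun {u w} hadj => hcprop hadj⟩
    have hle := hck.chromaticNumber_le
    rw [hchi] at hle
    exact_mod_cast hle
  exact le_antisymm (Nat.sInf_le hmem) (le_csInf ⟨p, hmem⟩ hlb)
end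

section
/- Every uniquely p-colorable (finite simple) graph G is also uniquely (p, p−1)-colorable; that is, χ_{p−1}(G) = p and every conditional (p, p−1)-coloring of G induces the same partition of V(G). -/
open SimpleGraph

/-- Any proper `p`-coloring of a graph with chromatic number `p ≥ 1` is surjective. -/
lemma surj_of_proper_aux {V : Type*} [Fintype V] {G : SimpleGraph V} {p : ℕ}
    (hχ : G.chromaticNumber = (p : ℕ∞)) (hp : 1 ≤ p) {c : V → Fin p}
    (hc : IsProperColoring G c) : Function.Surjective c := by
  by_contra h
  rw [Function.Surjective] at h
  push_neg at h
  obtain ⟨i, hi⟩ := h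
  let C : G.Coloring {j : Fin p // j ≠ i} :=
    SimpleGraph.Coloring.mk (fun w => ⟨c w, hi w⟩)
      (fun {u v} hadj heq => hc hadj (congrArg Subtype.val heq))
  have hcol := C.colorable
  have hcard : Fintype.card {j : Fin p // j ≠ i} = p - 1 := by
    simp [Fintype.card_subtype_compl]
  rw [hcard] at hcol
  have h2 := SimpleGraph.chromaticNumber_le_iff_colorable.mpr hcol
  rw [hχ] at h2
  have h3 : p ≤ p - 1 := by exact_mod_cast h2
  omega

lemma ncard_ne_aux (p : ℕ) (a : Fin p) : {i : Fin p | i ≠ a}.ncard = p - 1 := by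
  have h : {i : Fin p | i ≠ a} = Set.univ \ {a} := by ext; simp
  rw [h, Set.ncard_diff_singleton_of_mem (Set.mem_univ a), Set.ncard_univ,
    Nat.card_eq_fintype_card, Fintype.card_fin]

/-- In a uniquely `p`-colorable graph, every vertex sees every color other than its own. -/
lemma exists_nbr_aux {V : Type*} [Fintype V] {G : SimpleGraph V} {p : ℕ}
    (hG : UniquelyColorable G p) {c : V → Fin p} (hc : IsProperColoring G c)
    (hs : Function.Surjective c) (v : V) (i : Fin p) (hi : i ≠ c v) :
    i ∈ c '' G.neighborSet v := by
  classical
  by_contra h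
  have hnb : ∀ u ∈ G.neighborSet v, c u ≠ i := fun u hu heq => h ⟨u, hu, heq⟩
  set c' := Function.update c v i with hc'
  have hprop : IsProperColoring G c' := by
    intro a b hadj
    by_cases ha : a = v
    · by_cases hb : b = v
      · rw [ha, hb] at hadj
        exact absurd hadj (G.loopless.irrefl _)
      · rw [ha] at hadj ⊢
        rw [hc', Function.update_self, Function.update_of_ne hb]
        exact fun h2 => hnb b hadj h2.symm
    · by_cases hb : b = v
      · rw [hb] at hadj ⊢
        rw [hc', Function.update_of_ne ha, Function.update_self]
        exact hnb a (G.symm.symm _ _ hadj)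
      · rw [hc', Function.update_of_ne ha, Function.update_of_ne hb]
        exact hc hadj
  have hsp := hG.2 c c' hc hprop
  obtain ⟨u, hu⟩ := hs i
  have huv : u ≠ v := by
    intro h2
    exact hi (h2 ▸ hu).symm
  have hcc : c' u = c' v := by
    rw [hc', Function.update_of_ne huv, Function.update_self, hu]
  have hcuv : c u = c v := (hsp u v).mpr hcc
  exact hi (hu ▸ hcuv)

/-- **Corollary.** Every uniquely `p`-colorable graph is also uniquely
`(p, p-1)`-colorable. -/
theorem uniquelyCondColorable_of_uniquelyColorable {V : Type*} [Fintype V]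
    (G : SimpleGraph V) (p : ℕ) (hG : UniquelyColorable G p) :
    UniquelyCondColorable G p (p - 1) := by
  obtain ⟨hχ, huniq⟩ := hG
  obtain ⟨C⟩ : G.Colorable p := SimpleGraph.chromaticNumber_le_iff_colorable.mp hχ.le
  let c₀ : V → Fin p := fun v => C v
  have hprop0 : IsProperColoring G c₀ := fun u v h => C.valid h
  have hsurj0 : Function.Surjective c₀ := by
    rcases Nat.eq_zero_or_pos p with h0 | h1
    · subst h0; intro b; exact b.elim0
    · exact surj_of_proper_aux hχ h1 hprop0
  have hcondall : ∀ c : V → Fin p, IsProperColoring G c → Function.Surjective c →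
      IsCondColoring G (p - 1) c := by
    intro c hc hs
    refine ⟨hs, hc, fun v => ?_⟩
    rcases Nat.eq_zero_or_pos p with h0 | h1
    · simp [h0]
    · have hsub : {i : Fin p | i ≠ c v} ⊆ c '' G.neighborSet v :=
        fun i hi => exists_nbr_aux ⟨hχ, huniq⟩ hc hs v i hi
      have h1' : p - 1 ≤ (c '' G.neighborSet v).ncard := by
        rw [← ncard_ne_aux p (c v)]
        exact Set.ncard_le_ncard hsub (Set.toFinite _)
      exact le_trans (min_le_right _ _) h1'
  constructor
  · apply le_antisymm
    · exact Nat.sInf_le ⟨c₀, hcondall c₀ hprop0 hsurj0⟩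
    · have hne : {k : ℕ | ∃ c : V → Fin k, IsCondColoring G (p - 1) c}.Nonempty :=
        ⟨p, c₀, hcondall c₀ hprop0 hsurj0⟩
      apply le_csInf hne
      rintro k ⟨c, hcs, hcp, -⟩
      have hk : G.Colorable k := ⟨SimpleGraph.Coloring.mk c (fun {u v} h => hcp h)⟩
      have h2 := SimpleGraph.chromaticNumber_le_iff_colorable.mpr hk
      rw [hχ] at h2
      exact_mod_cast h2
  · intro c₁ c₂ h1 h2
    exact huniq c₁ c₂ h1.2.1 h2.2.1
end

section
/- For every integer k ≥ 1, there exists a uniquely (3,2)-colorable graph G_k with exactly k + 2 vertices. (Concretely, G₁ = C₃, and G_{k+1} is obtained from G_k by adding one new vertex w adjacent to both endpoints of some existing edge uv of G_k; each such G_k is uniquely (3,2)-colorable.) -/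
open SimpleGraph

def P2 (n : ℕ) : SimpleGraph (Fin n) where
  Adj u v := u.val ≠ v.val ∧ v.val ≤ u.val + 2 ∧ u.val ≤ v.val + 2
  symm := ⟨fun u v h => ⟨fun e => h.1 e.symm, h.2.2, h.2.1⟩⟩
  loopless := ⟨fun u h => h.1 rfl⟩

lemma P2_adj {n} {u v : Fin n} :
    (P2 n).Adj u v ↔ u.val ≠ v.val ∧ v.val ≤ u.val + 2 ∧ u.val ≤ v.val + 2 := Iff.rfl

lemma P2_color_eq {n : ℕ} (hn : 3 ≤ n) (c : Fin n → Fin 3)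
    (hc : ∀ ⦃u v⦄, (P2 n).Adj u v → c u ≠ c v) (u v : Fin n) :
    (c u = c v ↔ u.val % 3 = v.val % 3) := by
  set s : ℕ → Fin 3 := fun j => c ⟨j % 3, lt_of_lt_of_le (Nat.mod_lt _ (by omega)) hn⟩ with hs
  have hsmod : ∀ j, s j = s (j % 3) := by
    intro j
    simp only [hs]
    congr 1
    exact Fin.ext (by simp)
  have hsinj : ∀ a b : ℕ, a % 3 ≠ b % 3 → s a ≠ s b := by
    intro a b hab
    apply hc
    rw [P2_adj]
    refine ⟨hab, ?_, ?_⟩ <;> simp <;> omega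
  have key : ∀ i, ∀ h : i < n, c ⟨i, h⟩ = s i := by
    intro i
    induction i using Nat.strong_induction_on with
    | _ i IH =>
      intro h
      by_cases h3 : i < 3
      · simp only [hs]
        congr 1
        exact Fin.ext (by simp; omega)
      · push_neg at h3
        have h1 : c ⟨i - 1, by omega⟩ = s (i - 1) := IH (i - 1) (by omega) (by omega)
        have h2 : c ⟨i - 2, by omega⟩ = s (i - 2) := IH (i - 2) (by omega) (by omega)
        have a1 : c ⟨i, h⟩ ≠ s (i - 1) := by
          rw [← h1]; apply hc; rw [P2_adj]; refine ⟨?_, ?_, ?_⟩ <;> simp <;> omega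
        have a2 : c ⟨i, h⟩ ≠ s (i - 2) := by
          rw [← h2]; apply hc; rw [P2_adj]; refine ⟨?_, ?_, ?_⟩ <;> simp <;> omega
        have d12 : s (i - 1) ≠ s (i - 2) := hsinj _ _ (by omega)
        have di1 : s i ≠ s (i - 1) := hsinj _ _ (by omega)
        have di2 : s i ≠ s (i - 2) := hsinj _ _ (by omega)
        -- four values in Fin 3 can't be pairwise distinct
        by_contra hne
        have b0 := (c ⟨i, h⟩).isLt
        have b1 := (s i).isLt
        have b2 := (s (i - 1)).isLt
        have b3 := (s (i - 2)).isLt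
        simp only [Ne, Fin.ext_iff] at hne a1 a2 d12 di1 di2
        omega
  have hu : c u = s u.val := by rw [← key u.val u.isLt]
  have hv : c v = s v.val := by rw [← key v.val v.isLt]
  rw [hu, hv]
  constructor
  · intro h
    by_contra hne
    exact hsinj _ _ hne h
  · intro h
    rw [hsmod u.val, hsmod v.val, h]

/-- For every `k ≥ 1` there exists a uniquely `(3,2)`-colorable graph with
exactly `k + 2` vertices. -/
theorem exists_uniquelyCondColorable (k : ℕ) (hk : 1 ≤ k) :
    ∃ G : SimpleGraph (Fin (k + 2)), UniquelyCondColorable G 3 2 := by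
  classical
  set n := k + 2 with hn
  have hn3 : 3 ≤ n := by omega
  have hc0 : IsCondColoring (P2 n) 2 (fun v : Fin n => (⟨v.val % 3, by omega⟩ : Fin 3)) := by
    refine ⟨?_, ?_, ?_⟩
    · intro j
      refine ⟨⟨j.val, by omega⟩, ?_⟩
      exact Fin.ext (by simp [Nat.mod_eq_of_lt j.isLt])
    · intro u v huv
      rw [P2_adj] at huv
      simp only [Ne, Fin.ext_iff, Fin.val_mk]
      omega
    · intro v
      refine le_trans (min_le_right _ _) ?_
      obtain ⟨a, b, ha, hb, hab⟩ :
          ∃ a b : Fin n, (P2 n).Adj v a ∧ (P2 n).Adj v b ∧ a.val % 3 ≠ b.val % 3 := by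
        by_cases h1 : v.val + 2 < n
        · exact ⟨⟨v.val + 1, by omega⟩, ⟨v.val + 2, by omega⟩,
            by rw [P2_adj]; refine ⟨?_, ?_, ?_⟩ <;> simp <;> omega,
            by rw [P2_adj]; refine ⟨?_, ?_, ?_⟩ <;> simp <;> omega,
            by simp; omega⟩
        · by_cases h2 : 2 ≤ v.val
          · exact ⟨⟨v.val - 1, by omega⟩, ⟨v.val - 2, by omega⟩,
              by rw [P2_adj]; refine ⟨?_, ?_, ?_⟩ <;> simp <;> omega,
              by rw [P2_adj]; refine ⟨?_, ?_, ?_⟩ <;> simp <;> omega,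
              by simp; omega⟩
          · have hv1 : v.val = 1 ∧ n = 3 := by have := v.isLt; omega
            exact ⟨⟨v.val - 1, by omega⟩, ⟨v.val + 1, by omega⟩,
              by rw [P2_adj]; refine ⟨?_, ?_, ?_⟩ <;> simp <;> omega,
              by rw [P2_adj]; refine ⟨?_, ?_, ?_⟩ <;> simp <;> omega,
              by simp; omega⟩
      set cc : Fin n → Fin 3 := fun v => (⟨v.val % 3, by omega⟩ : Fin 3) with hcc
      have hne : cc a ≠ cc b := by
        simp only [hcc, Ne, Fin.ext_iff, Fin.val_mk]
        exact hab
      have hsub : ({cc a, cc b} : Set (Fin 3)) ⊆ cc '' (P2 n).neighborSet v := by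
        rintro x (rfl | rfl)
        · exact ⟨a, ha, rfl⟩
        · exact ⟨b, hb, rfl⟩
      calc 2 = ({cc a, cc b} : Set (Fin 3)).ncard := (Set.ncard_pair hne).symm
        _ ≤ (cc '' (P2 n).neighborSet v).ncard := Set.ncard_le_ncard hsub (Set.toFinite _)
  refine ⟨P2 n, ?_, ?_⟩
  · have hmem : 3 ∈ {m : ℕ | ∃ c : Fin n → Fin m, IsCondColoring (P2 n) 2 c} := ⟨_, hc0⟩
    have hlb : ∀ m ∈ {m : ℕ | ∃ c : Fin n → Fin m, IsCondColoring (P2 n) 2 c}, 3 ≤ m := by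
      rintro m ⟨c, _, hcp, _⟩
      have hinj : Function.Injective (fun j : Fin 3 => c ⟨j.val, by omega⟩) := by
        intro a b hab
        by_contra hneq
        have hvne : a.val ≠ b.val := fun h => hneq (Fin.ext h)
        have := a.isLt; have := b.isLt
        exact hcp (u := ⟨a.val, by omega⟩) (v := ⟨b.val, by omega⟩)
          (by rw [P2_adj]; refine ⟨?_, ?_, ?_⟩ <;> simp <;> omega) hab
      calc 3 = Fintype.card (Fin 3) := by simp
        _ ≤ Fintype.card (Fin m) := Fintype.card_le_of_injective _ hinj
        _ = m := by simp
    unfold condChrom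
    exact le_antisymm (Nat.sInf_le hmem) (hlb _ (Nat.sInf_mem ⟨3, hmem⟩))
  · intro c₁ c₂ h1 h2 u v
    exact (P2_color_eq hn3 c₁ h1.2.1 u v).trans (P2_color_eq hn3 c₂ h2.2.1 u v).symm
end

section
/- Every path P_n with n ≥ 3 vertices is uniquely (3,2)-colorable: χ_2(P_n) = 3, and every conditional (3,2)-coloring of P_n induces the same partition of V(P_n), namely the partition of the vertices v₁,...,v_n by residue of their index modulo 3. -/
open SimpleGraph

lemma nbhd_zero {n : ℕ} (hn : 2 ≤ n) (v : Fin n) (hv : v.val = 0) :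
    (pathGraph n).neighborSet v = {(⟨1, by omega⟩ : Fin n)} := by
  ext u
  simp only [SimpleGraph.mem_neighborSet, pathGraph_adj, Set.mem_singleton_iff, Fin.ext_iff]
  omega

lemma nbhd_last {n : ℕ} (hn : 2 ≤ n) (v : Fin n) (hv : v.val + 1 = n) :
    (pathGraph n).neighborSet v = {(⟨n - 2, by omega⟩ : Fin n)} := by
  ext u
  simp only [SimpleGraph.mem_neighborSet, pathGraph_adj, Set.mem_singleton_iff, Fin.ext_iff]
  omega

lemma nbhd_mid' {n i : ℕ} (h : i + 2 < n) :
    (pathGraph n).neighborSet ⟨i + 1, by omega⟩ =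
      {(⟨i, by omega⟩ : Fin n), (⟨i + 2, by omega⟩ : Fin n)} := by
  ext u
  simp only [SimpleGraph.mem_neighborSet, pathGraph_adj, Set.mem_insert_iff,
    Set.mem_singleton_iff, Fin.ext_iff]
  omega

lemma std_coloring {n : ℕ} (hn : 3 ≤ n) :
    IsCondColoring (pathGraph n) 2 (fun i : Fin n => (⟨i.val % 3, by omega⟩ : Fin 3)) := by
  refine ⟨?_, ?_, ?_⟩
  · intro y
    exact ⟨⟨y.val, by omega⟩, Fin.ext (Nat.mod_eq_of_lt y.isLt)⟩
  · intro u v hadj e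
    rw [pathGraph_adj] at hadj
    simp only [Fin.mk.injEq] at e
    omega
  · intro v
    rcases Nat.lt_or_ge v.val 1 with hv | hv
    · have h0 : v.val = 0 := by omega
      rw [nbhd_zero (by omega) v h0]
      have : gDeg (pathGraph n) v = 1 := by
        unfold gDeg; rw [nbhd_zero (by omega) v h0]; exact Set.ncard_singleton _
      rw [this]
      simp [Set.ncard_singleton]
    rcases Nat.lt_or_ge v.val (n - 1) with hv1 | hv1
    · have hvm : v = ⟨(v.val - 1) + 1, by omega⟩ := Fin.ext (by simp; omega)
      rw [hvm, nbhd_mid' (show v.val - 1 + 2 < n by omega), Set.image_pair]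
      refine le_trans (min_le_right _ _) ?_
      rw [Set.ncard_pair]
      simp only [ne_eq, Fin.mk.injEq]
      omega
    · have hlast : v.val + 1 = n := by omega
      rw [nbhd_last (by omega) v hlast]
      have : gDeg (pathGraph n) v = 1 := by
        unfold gDeg; rw [nbhd_last (by omega) v hlast]; exact Set.ncard_singleton _
      rw [this]
      simp [Set.ncard_singleton]
lemma internal_distinct {n k : ℕ} {c : Fin n → Fin k}
    (h : IsCondColoring (pathGraph n) 2 c) (i : ℕ) (h2 : i + 2 < n) :
    c ⟨i, by omega⟩ ≠ c ⟨i + 2, by omega⟩ := by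
  have hN := nbhd_mid' h2
  have hC2 := h.2.2 ⟨i + 1, by omega⟩
  rw [hN] at hC2
  have hd : gDeg (pathGraph n) (⟨i + 1, by omega⟩ : Fin n) = 2 := by
    unfold gDeg
    rw [hN]
    exact Set.ncard_pair (by simp [Fin.ext_iff])
  rw [hd, Set.image_pair] at hC2
  intro heq
  rw [heq] at hC2
  simp at hC2

lemma adj_distinct {n k : ℕ} {c : Fin n → Fin k}
    (h : IsCondColoring (pathGraph n) 2 c) (i : ℕ) (h1 : i + 1 < n) :
    c ⟨i, by omega⟩ ≠ c ⟨i + 1, by omega⟩ :=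
  h.2.1 (pathGraph_adj.mpr (Or.inl rfl))

lemma fin3_pigeon : ∀ a b x y : Fin 3, x ≠ y → a ≠ x → a ≠ y → b ≠ x → b ≠ y → a = b := by
  decide

lemma period {n : ℕ} {c : Fin n → Fin 3}
    (h : IsCondColoring (pathGraph n) 2 c) (i : ℕ) (h3 : i + 3 < n) :
    c ⟨i + 3, by omega⟩ = c ⟨i, by omega⟩ := by
  have hxy := adj_distinct h (i + 1) (by omega)
  have hax : c ⟨i + 3, by omega⟩ ≠ c ⟨i + 1, by omega⟩ :=
    fun e => internal_distinct h (i + 1) (by omega) e.symm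
  have hay : c ⟨i + 3, by omega⟩ ≠ c ⟨i + 2, by omega⟩ :=
    fun e => adj_distinct h (i + 2) (by omega) e.symm
  have hbx : c ⟨i, by omega⟩ ≠ c ⟨i + 1, by omega⟩ := adj_distinct h i (by omega)
  have hby : c ⟨i, by omega⟩ ≠ c ⟨i + 2, by omega⟩ := internal_distinct h i (by omega)
  exact fin3_pigeon _ _ _ _ hxy hax hay hbx hby

lemma mod_lemma {n : ℕ} (hn : 3 ≤ n) {c : Fin n → Fin 3}
    (h : IsCondColoring (pathGraph n) 2 c) :
    ∀ m : ℕ, (hm : m < n) → c ⟨m, hm⟩ = c ⟨m % 3, by omega⟩ := by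
  intro m
  induction m using Nat.strong_induction_on with
  | _ m ih =>
    intro hm
    by_cases hlt : m < 3
    · congr 1
      exact Fin.ext (show m = m % 3 by omega)
    · have h3 : m - 3 + 3 < n := by omega
      have he : (⟨m, hm⟩ : Fin n) = ⟨m - 3 + 3, by omega⟩ := Fin.ext (show m = m - 3 + 3 by omega)
      rw [he, period h (m - 3) h3, ih (m - 3) (by omega) (by omega)]
      congr 1
      exact Fin.ext (show (m - 3) % 3 = m % 3 by omega)

lemma resid_inj {n : ℕ} (hn : 3 ≤ n) {c : Fin n → Fin 3}
    (h : IsCondColoring (pathGraph n) 2 c) :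
    ∀ a b : ℕ, (ha : a < 3) → (hb : b < 3) →
      c ⟨a, by omega⟩ = c ⟨b, by omega⟩ → a = b := by
  have d01 := adj_distinct h 0 (by omega)
  have d12 := adj_distinct h 1 (by omega)
  have d02 := internal_distinct h 0 (by omega)
  intro a b ha hb hc
  interval_cases a <;> interval_cases b <;> simp_all

lemma key {n : ℕ} (hn : 3 ≤ n) {c : Fin n → Fin 3}
    (h : IsCondColoring (pathGraph n) 2 c) :
    ∀ i j : Fin n, (c i = c j ↔ (i : ℕ) % 3 = (j : ℕ) % 3) := by
  intro i j
  have hi : c i = c ⟨(i : ℕ) % 3, by omega⟩ := by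
    rw [← mod_lemma hn h i.val i.isLt]
  have hj : c j = c ⟨(j : ℕ) % 3, by omega⟩ := by
    rw [← mod_lemma hn h j.val j.isLt]
  constructor
  · intro e
    exact resid_inj hn h _ _ (by omega) (by omega) (hi ▸ hj ▸ e)
  · intro e
    rw [hi, hj]
    congr 1
    exact Fin.ext e

lemma lower_bound {n k : ℕ} (hn : 3 ≤ n) {c : Fin n → Fin k}
    (h : IsCondColoring (pathGraph n) 2 c) : 3 ≤ k := by
  have d01 : c ⟨0, by omega⟩ ≠ c ⟨1, by omega⟩ := adj_distinct h 0 (by omega)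
  have d12 : c ⟨1, by omega⟩ ≠ c ⟨2, by omega⟩ := adj_distinct h 1 (by omega)
  have d02 : c ⟨0, by omega⟩ ≠ c ⟨2, by omega⟩ := internal_distinct h 0 (by omega)
  have hcard : ({c ⟨0, by omega⟩, c ⟨1, by omega⟩, c ⟨2, by omega⟩} : Finset (Fin k)).card = 3 := by
    rw [Finset.card_insert_of_notMem (by simp [d01, d02]),
      Finset.card_insert_of_notMem (by simp [d12]), Finset.card_singleton]
  calc 3 = ({c ⟨0, by omega⟩, c ⟨1, by omega⟩, c ⟨2, by omega⟩} : Finset (Fin k)).card :=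
        hcard.symm
    _ ≤ Fintype.card (Fin k) := Finset.card_le_univ _
    _ = k := Fintype.card_fin k

lemma condChrom_eq {n : ℕ} (hn : 3 ≤ n) : condChrom (pathGraph n) 2 = 3 := by
  have hmem : 3 ∈ {k : ℕ | ∃ c : Fin n → Fin k, IsCondColoring (pathGraph n) 2 c} :=
    ⟨_, std_coloring hn⟩
  refine le_antisymm (Nat.sInf_le hmem) (le_csInf ⟨3, hmem⟩ ?_)
  rintro k ⟨c, hc⟩
  exact lower_bound hn hc

/-- Every path `P_n` with `n ≥ 3` vertices is uniquely `(3,2)`-colorable, and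
every conditional `(3,2)`-coloring of `P_n` induces the partition of the vertices by the
residue of their index modulo 3. -/
theorem path_uniquelyCondColorable (n : ℕ) (hn : 3 ≤ n) :
    UniquelyCondColorable (pathGraph n) 3 2 ∧
    ∀ c : Fin n → Fin 3, IsCondColoring (pathGraph n) 2 c →
      ∀ i j : Fin n, (c i = c j ↔ (i : ℕ) % 3 = (j : ℕ) % 3) := by
  refine ⟨⟨condChrom_eq hn, ?_⟩, fun c hc => key hn hc⟩
  intro c₁ c₂ h₁ h₂ u v
  rw [key hn h₁, ← key hn h₂]
end

section
/- Let T be a (finite) tree with n vertices that is not a path, let r ≥ 2, and let k = χ_r(T). If k ≠ n, then T is not uniquely (k,r)-colorable; that is, there exist two conditional (k,r)-colorings of T inducing different partitions of V(T). -/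
open SimpleGraph

section Aux

variable {V : Type*} [Fintype V]

private lemma adjOf {T : SimpleGraph V} {v w : V} (h : w ∈ T.neighborSet v) : T.Adj v w := h

private lemma exists_fresh {k : ℕ} (s : Finset (Fin k)) (h : s.card < k) : ∃ β : Fin k, β ∉ s := by
  by_contra h'
  push_neg at h'
  have hle : (Finset.univ : Finset (Fin k)).card ≤ s.card :=
    Finset.card_le_card fun β _ => h' β
  simp only [Finset.card_univ, Fintype.card_fin] at hle
  omega

private lemma condColoring_card (T : SimpleGraph V) (r : ℕ) :
    ∃ c : V → Fin (Fintype.card V), IsCondColoring T r c := by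
  refine ⟨Fintype.equivFin V, (Fintype.equivFin V).surjective, ?_, ?_⟩
  · intro u v huv h
    exact huv.ne ((Fintype.equivFin V).injective h)
  · intro v
    rw [Set.ncard_image_of_injective _ (Fintype.equivFin V).injective]
    exact min_le_left _ _

private lemma min_lt_k {T : SimpleGraph V} {r k : ℕ} {c : V → Fin k}
    (hc : IsCondColoring T r c) (z : V) : min (gDeg T z) r < k := by
  have hz : c z ∉ c '' T.neighborSet z := by
    rintro ⟨w, hw, hwz⟩
    exact hc.2.1 (adjOf hw) hwz.symm
  have h1 : (insert (c z) (c '' T.neighborSet z)).ncard = (c '' T.neighborSet z).ncard + 1 :=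
    Set.ncard_insert_of_notMem hz (Set.toFinite _)
  have h2 : (insert (c z) (c '' T.neighborSet z)).ncard ≤ k := by
    have h := Set.ncard_le_ncard
      (Set.subset_univ (insert (c z) (c '' T.neighborSet z))) Set.finite_univ
    simpa [Set.ncard_univ, Nat.card_eq_fintype_card] using h
  have h3 := hc.2.2 z
  omega

private lemma tree_bridge {T : SimpleGraph V} (hT : T.IsTree) {p q : V} (h : T.Adj p q) :
    ¬ (T.deleteEdges {s(p, q)}).Reachable p q :=
  isBridge_iff.mp (isAcyclic_iff_forall_adj_isBridge.mp hT.IsAcyclic h)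

private lemma move_lemma {T : SimpleGraph V} (hT : T.IsTree) {r k : ℕ} {c : V → Fin k}
    (hc : IsCondColoring T r c) {p q x y : V} (hpq : T.Adj p q)
    {b β : Fin k} (hbβ : b ≠ β)
    (hcq1 : c q ≠ b) (hcq2 : c q ≠ β)
    (hcx : c x = b) (hcy : c y = b)
    (hxA : ¬ (T.deleteEdges {s(p, q)}).Reachable x q)
    (hyB : (T.deleteEdges {s(p, q)}).Reachable y q)
    (hC2q : min (gDeg T q) r ≤
      (insert (c p) (Equiv.swap b β '' (c '' (T.neighborSet q \ {p})))).ncard) :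
    ∃ c₁ c₂ : V → Fin k, IsCondColoring T r c₁ ∧ IsCondColoring T r c₂ ∧
      ¬ SamePartition c₁ c₂ := by
  classical
  set T' := T.deleteEdges {s(p, q)} with hT'
  have hbr : ¬ T'.Reachable p q := tree_bridge hT hpq
  have hqq : T'.Reachable q q := Reachable.refl q
  have hAdj' : ∀ {u w : V}, T.Adj u w → s(u, w) ≠ s(p, q) → T'.Adj u w := by
    intro u w h hne
    exact SimpleGraph.deleteEdges_adj.mpr ⟨h, by simpa using hne⟩
  have hstep : ∀ {u w : V}, T.Adj u w → T'.Reachable u q → ¬ T'.Reachable w q →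
      u = q ∧ w = p := by
    intro u w h hu hw
    by_cases hne : s(u, w) = s(p, q)
    · rcases Sym2.eq_iff.mp hne with ⟨h1, h2⟩ | ⟨h1, h2⟩
      · exact absurd (h1 ▸ hu) hbr
      · exact ⟨h1, h2⟩
    · exact absurd ((hAdj' h hne).symm.reachable.trans hu) hw
  set π := Equiv.swap b β with hπ
  set c' : V → Fin k := fun v => if T'.Reachable v q then π (c v) else c v with hcdef
  have hcA : ∀ {v}, ¬ T'.Reachable v q → c' v = c v := fun h => by simp [hcdef, h]
  have hcB : ∀ {v}, T'.Reachable v q → c' v = π (c v) := fun h => by simp [hcdef, h]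
  have hπcq : π (c q) = c q := Equiv.swap_apply_of_ne_of_ne hcq1 hcq2
  have hcp' : c' p = c p := hcA hbr
  have hcq' : c' q = c q := (hcB hqq).trans hπcq
  have hproper : ∀ ⦃u w : V⦄, T.Adj u w → c' u ≠ c' w := by
    intro u w h
    by_cases hu : T'.Reachable u q <;> by_cases hw : T'.Reachable w q
    · rw [hcB hu, hcB hw]; exact fun he => hc.2.1 h (π.injective he)
    · obtain ⟨rfl, rfl⟩ := hstep h hu hw
      rw [hcq', hcp']
      exact fun he => hc.2.1 hpq he.symm
    · obtain ⟨rfl, rfl⟩ := hstep h.symm hw hu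
      rw [hcp', hcq']
      exact hc.2.1 hpq
    · rw [hcA hu, hcA hw]; exact hc.2.1 h
  have hnbrA : ∀ {v w : V}, ¬ T'.Reachable v q → v ≠ p → w ∈ T.neighborSet v →
      ¬ T'.Reachable w q := by
    intro v w hv hvp hw hrw
    exact hvp (hstep (adjOf hw).symm hrw hv).2
  have hnbrB : ∀ {v w : V}, T'.Reachable v q → v ≠ q → w ∈ T.neighborSet v →
      T'.Reachable w q := by
    intro v w hv hvq hw
    by_contra hrw
    exact hvq (hstep (adjOf hw) hv hrw).1
  have himA : ∀ {v : V}, ¬ T'.Reachable v q → v ≠ p →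
      c' '' T.neighborSet v = c '' T.neighborSet v :=
    fun hv hvp => Set.image_congr fun w hw => hcA (hnbrA hv hvp hw)
  have himB : ∀ {v : V}, T'.Reachable v q → v ≠ q →
      c' '' T.neighborSet v = π '' (c '' T.neighborSet v) := by
    intro v hv hvq
    rw [Set.image_image]
    exact Set.image_congr fun w hw => hcB (hnbrB hv hvq hw)
  -- image at p
  have hwA : ∀ w ∈ T.neighborSet p \ {q}, ¬ T'.Reachable w q := by
    rintro w ⟨hw, hwq⟩ hrw
    have hne : s(p, w) ≠ s(p, q) := by
      intro he
      rcases Sym2.eq_iff.mp he with ⟨-, h2⟩ | ⟨h1, -⟩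
      · exact hwq h2
      · exact hpq.ne h1
    exact hbr ((hAdj' (adjOf hw) hne).reachable.trans hrw)
  have hinsp : insert q (T.neighborSet p \ {q}) = T.neighborSet p := by
    rw [Set.insert_diff_singleton, Set.insert_eq_self.mpr (show q ∈ T.neighborSet p from hpq)]
  have himp : c' '' T.neighborSet p = c '' T.neighborSet p := by
    conv_lhs => rw [← hinsp]
    conv_rhs => rw [← hinsp]
    rw [Set.image_insert_eq, Set.image_insert_eq, hcq',
      Set.image_congr fun w hw => hcA (hwA w hw)]
  -- image at q
  have hwB : ∀ w ∈ T.neighborSet q \ {p}, T'.Reachable w q := by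
    rintro w ⟨hw, hwp⟩
    have hne : s(q, w) ≠ s(p, q) := by
      intro he
      rcases Sym2.eq_iff.mp he with ⟨h1, -⟩ | ⟨-, h2⟩
      · exact hpq.ne h1.symm
      · exact hwp h2
    exact (hAdj' (adjOf hw) hne).symm.reachable
  have hinsq : insert p (T.neighborSet q \ {p}) = T.neighborSet q := by
    rw [Set.insert_diff_singleton, Set.insert_eq_self.mpr (show p ∈ T.neighborSet q from hpq.symm)]
  have himq : c' '' T.neighborSet q = insert (c p) (π '' (c '' (T.neighborSet q \ {p}))) := by
    conv_lhs => rw [← hinsq]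
    rw [Set.image_insert_eq, hcp', Set.image_image,
      Set.image_congr fun w hw => hcB (hwB w hw)]
  have hC2 : ∀ v : V, min (gDeg T v) r ≤ (c' '' T.neighborSet v).ncard := by
    intro v
    by_cases hvq : v = q
    · subst hvq; rw [himq]; exact hC2q
    by_cases hvp : v = p
    · subst hvp; rw [himp]; exact hc.2.2 _
    by_cases hv : T'.Reachable v q
    · rw [himB hv hvq, Set.ncard_image_of_injective _ π.injective]
      exact hc.2.2 v
    · rw [himA hv hvp]
      exact hc.2.2 v
  have hsurj : Function.Surjective c' := by
    intro γ
    by_cases hγb : γ = b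
    · exact ⟨x, by rw [hcA hxA, hcx, hγb]⟩
    by_cases hγβ : γ = β
    · refine ⟨y, ?_⟩
      rw [hcB hyB, hcy, hγβ, hπ]
      exact Equiv.swap_apply_left b β
    · obtain ⟨v, rfl⟩ := hc.1 γ
      by_cases hv : T'.Reachable v q
      · refine ⟨v, ?_⟩
        rw [hcB hv, hπ]
        exact Equiv.swap_apply_of_ne_of_ne hγb hγβ
      · exact ⟨v, hcA hv⟩
  have hne : ¬ SamePartition c c' := by
    intro hsp
    have h1 : c x = c y := by rw [hcx, hcy]
    have h2 := (hsp x y).mp h1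
    rw [hcA hxA, hcB hyB, hcx, hcy, hπ, Equiv.swap_apply_left] at h2
    exact hbβ h2
  exact ⟨c, c', hc, ⟨hsurj, hproper, hC2⟩, hne⟩

end Aux

/-- Let `T` be a tree on `n` vertices that is not a path (i.e. it has a
vertex of degree at least 3), let `r ≥ 2` and `k = χ_r(T)`. If `k ≠ n`, then `T` is not
uniquely `(k,r)`-colorable: there are two conditional `(k,r)`-colorings of `T` inducing
different partitions of the vertex set. -/
theorem tree_not_uniquelyCondColorable {V : Type*} [Fintype V] (T : SimpleGraph V)
    (hT : T.IsTree) (hnp : ∃ v, 3 ≤ gDeg T v) (r : ℕ) (hr : 2 ≤ r)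
    (k : ℕ) (hk : k = condChrom T r) (hkn : k ≠ Fintype.card V) :
    ∃ c₁ c₂ : V → Fin k, IsCondColoring T r c₁ ∧ IsCondColoring T r c₂ ∧
      ¬ SamePartition c₁ c₂ := by
  classical
  obtain ⟨z, hz⟩ := hnp
  have hkk : ∃ c : V → Fin k, IsCondColoring T r c := by
    rw [hk]
    exact Nat.sInf_mem (⟨Fintype.card V, condColoring_card T r⟩ :
      Set.Nonempty {k : ℕ | ∃ c : V → Fin k, IsCondColoring T r c})
  obtain ⟨c, hc⟩ := hkk
  have hkle : k ≤ Fintype.card V := by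
    rw [hk]
    exact Nat.sInf_le (show Fintype.card V ∈ {k : ℕ | ∃ c : V → Fin k, IsCondColoring T r c}
      from condColoring_card T r)
  have hklt : k < Fintype.card V := lt_of_le_of_ne hkle hkn
  obtain ⟨x, y, hxy, hcxy⟩ := Fintype.exists_ne_map_eq_of_card_lt c (by simpa using hklt)
  have hk3 : 3 ≤ k := by
    have h1 := min_lt_k hc z
    have hmin : 2 ≤ min (gDeg T z) r := le_min (le_trans (by norm_num) hz) hr
    omega
  by_cases hcase : ∀ w : V, Set.InjOn c (T.neighborSet w)
  · -- every neighborhood is rainbow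
    have hk4 : 4 ≤ k := by
      have h1 : (c '' T.neighborSet z).ncard = gDeg T z := Set.ncard_image_of_injOn (hcase z)
      have h2 : c z ∉ c '' T.neighborSet z := by
        rintro ⟨w, hw, hwz⟩
        exact hc.2.1 (adjOf hw) hwz.symm
      have h3 : (insert (c z) (c '' T.neighborSet z)).ncard = (c '' T.neighborSet z).ncard + 1 :=
        Set.ncard_insert_of_notMem h2 (Set.toFinite _)
      have h4 : (insert (c z) (c '' T.neighborSet z)).ncard ≤ k := by
        have h := Set.ncard_le_ncard
          (Set.subset_univ (insert (c z) (c '' T.neighborSet z))) Set.finite_univ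
        simpa [Set.ncard_univ, Nat.card_eq_fintype_card] using h
      omega
    obtain ⟨W₀⟩ := hT.isConnected.preconnected x y
    obtain ⟨W, hW⟩ := W₀.toPath
    cases W with
    | nil => exact absurd rfl hxy
    | @cons _ x1 _ hadj1 W1 =>
      cases W1 with
      | nil => exact absurd hcxy (hc.2.1 hadj1)
      | @cons _ x2 _ hadj2 W2 =>
        have hnd := hW.support_nodup
        rw [SimpleGraph.Walk.support_cons, SimpleGraph.Walk.support_cons] at hnd
        have hx_x2 : x ≠ x2 := by
          intro he
          exact (List.nodup_cons.mp hnd).1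
            (List.mem_cons_of_mem _ (by rw [he]; exact W2.start_mem_support))
        have hx1_W2 : x1 ∉ W2.support :=
          (List.nodup_cons.mp (List.nodup_cons.mp hnd).2).1
        have hcx1 : c x1 ≠ c x := Ne.symm (hc.2.1 hadj1)
        have hcx2 : c x2 ≠ c x := by
          intro h
          exact hx_x2 (hcase x1 hadj1.symm hadj2 h.symm)
        have hc3 : ({c x, c x1, c x2} : Finset (Fin k)).card ≤ 3 := by
          have h1 := Finset.card_insert_le (c x) {c x1, c x2}
          have h2 := Finset.card_insert_le (c x1) ({c x2} : Finset (Fin k))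
          have h3 : ({c x2} : Finset (Fin k)).card = 1 := Finset.card_singleton _
          omega
        obtain ⟨β, hβ⟩ := exists_fresh {c x, c x1, c x2}
          (lt_of_le_of_lt hc3 (lt_of_lt_of_le (by norm_num) hk4))
        simp only [Finset.mem_insert, Finset.mem_singleton, not_or] at hβ
        have hbr : ¬ (T.deleteEdges {s(x1, x2)}).Reachable x1 x2 := tree_bridge hT hadj2
        have hxA : ¬ (T.deleteEdges {s(x1, x2)}).Reachable x x2 := by
          intro h
          apply hbr
          refine Reachable.trans ?_ h
          refine SimpleGraph.Adj.reachable (SimpleGraph.deleteEdges_adj.mpr ⟨hadj1.symm, ?_⟩)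
          intro hmem
          rcases Sym2.eq_iff.mp (Set.mem_singleton_iff.mp hmem) with ⟨-, h2⟩ | ⟨h1, -⟩
          · exact hx_x2 h2
          · exact hadj2.ne h1
        have hyB : (T.deleteEdges {s(x1, x2)}).Reachable y x2 := by
          have hedge : ∀ e ∈ W2.edges, e ∉ ({s(x1, x2)} : Set (Sym2 V)) := by
            intro e he hmem
            rw [Set.mem_singleton_iff] at hmem
            subst hmem
            exact hx1_W2 (W2.fst_mem_support_of_mem_edges he)
          exact (W2.toDeleteEdges _ hedge).reachable.symm
        have hS0 : c x1 ∉ c '' (T.neighborSet x2 \ {x1}) := by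
          rintro ⟨w, ⟨hw, hwne⟩, hwc⟩
          exact hwne (hcase x2 hw hadj2.symm hwc)
        have hfix : Equiv.swap (c x) β (c x1) = c x1 :=
          Equiv.swap_apply_of_ne_of_ne hcx1 (Ne.symm hβ.2.1)
        have hS0' : c x1 ∉ Equiv.swap (c x) β '' (c '' (T.neighborSet x2 \ {x1})) := by
          rintro ⟨γ, hγ, hγc⟩
          have hγe : γ = c x1 := (Equiv.swap (c x) β).injective (hγc.trans hfix.symm)
          exact hS0 (hγe ▸ hγ)
        have hins : insert x1 (T.neighborSet x2 \ {x1}) = T.neighborSet x2 := by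
          rw [Set.insert_diff_singleton,
            Set.insert_eq_self.mpr (show x1 ∈ T.neighborSet x2 from hadj2.symm)]
        have hC2q : min (gDeg T x2) r ≤
            (insert (c x1) (Equiv.swap (c x) β '' (c '' (T.neighborSet x2 \ {x1})))).ncard := by
          have hold := hc.2.2 x2
          conv_rhs at hold => rw [← hins]
          rw [Set.image_insert_eq, Set.ncard_insert_of_notMem hS0 (Set.toFinite _)] at hold
          rw [Set.ncard_insert_of_notMem hS0' (Set.toFinite _),
            Set.ncard_image_of_injective _ (Equiv.swap (c x) β).injective]
          omega
        exact move_lemma hT hc hadj2 (Ne.symm hβ.1) hcx2 (Ne.symm hβ.2.2) rfl hcxy.symm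
          hxA hyB hC2q
  · -- some neighborhood contains a repeated color
    obtain ⟨w, hw⟩ := not_forall.mp hcase
    unfold Set.InjOn at hw
    push_neg at hw
    obtain ⟨u1, hu1, u2, hu2, hceq, hune⟩ := hw
    have hpq : T.Adj u1 w := (adjOf hu1).symm
    obtain ⟨β, hβ⟩ := exists_fresh {c u1, c w} (by
      have h1 := Finset.card_insert_le (c u1) ({c w} : Finset (Fin k))
      have h2 : ({c w} : Finset (Fin k)).card = 1 := Finset.card_singleton _
      omega)
    simp only [Finset.mem_insert, Finset.mem_singleton, not_or] at hβ
    have hxA : ¬ (T.deleteEdges {s(u1, w)}).Reachable u1 w := tree_bridge hT hpq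
    have hyB : (T.deleteEdges {s(u1, w)}).Reachable u2 w := by
      refine SimpleGraph.Adj.reachable (SimpleGraph.deleteEdges_adj.mpr ⟨(adjOf hu2).symm, ?_⟩)
      intro hmem
      rcases Sym2.eq_iff.mp (Set.mem_singleton_iff.mp hmem) with ⟨h1, -⟩ | ⟨-, h2⟩
      · exact hune h1.symm
      · exact (adjOf hu1).ne h2
    have hbS0 : c u1 ∈ c '' (T.neighborSet w \ {u1}) :=
      ⟨u2, ⟨hu2, Ne.symm hune⟩, hceq.symm⟩
    have hins : insert u1 (T.neighborSet w \ {u1}) = T.neighborSet w := by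
      rw [Set.insert_diff_singleton,
        Set.insert_eq_self.mpr (show u1 ∈ T.neighborSet w from hu1)]
    have hC2q : min (gDeg T w) r ≤
        (insert (c u1) (Equiv.swap (c u1) β '' (c '' (T.neighborSet w \ {u1})))).ncard := by
      have hold := hc.2.2 w
      conv_rhs at hold => rw [← hins]
      rw [Set.image_insert_eq, Set.insert_eq_self.mpr hbS0] at hold
      calc min (gDeg T w) r ≤ (c '' (T.neighborSet w \ {u1})).ncard := hold
        _ = (Equiv.swap (c u1) β '' (c '' (T.neighborSet w \ {u1}))).ncard :=
          (Set.ncard_image_of_injective _ (Equiv.swap (c u1) β).injective).symm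
        _ ≤ (insert (c u1) (Equiv.swap (c u1) β '' (c '' (T.neighborSet w \ {u1})))).ncard :=
          Set.ncard_le_ncard (Set.subset_insert _ _) (Set.toFinite _)
    exact move_lemma hT hc hpq (Ne.symm hβ.1) (hc.2.1 (adjOf hu1)) (Ne.symm hβ.2) rfl hceq.symm
      hxA hyB hC2q
end
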